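/- arXiv:2404.07128 — 4 statements merged into one kernel-verified Lean document; each statement's English description precedes it below -/
import Mathlib

section
/- Let l_1, l_2, t_n ∈ ℕ, D_n ≥ 0, let A ⊂ ℝ^{l_1} be closed and convex, B ⊆ ℝ^{l_2}, and let F_t, F : ℝ^{l_1}×ℝ^{l_2} → ℝ_+ (t = 0,...,t_n−1) be functions such that for each t: u ↦ F(u,v) is differentiable and convex for all v ∈ ℝ^{l_2}, u ↦ F_t(u,v) is differentiable for all v ∈ ℝ^{l_2}, and ‖(∇_u F_t)(u,v)‖ ≤ D_n for all (u,v) ∈ A×B. Choose (u_0,v_0) ∈ A×B, let v_1,...,v_{t_n} ∈ B, set λ = 1/t_n, and define u_{t+1} = Proj_A(u_t − λ·(∇_u F_t)(u_t,v_t)) for t = 0,...,t_n−1. Then for any u* ∈ A: (1/t_n)·Σ_{t=0}^{t_n−1} F(u_t,v_t) ≤ F(u*,v_0) + (1/t_n)·Σ_{t=1}^{t_n−1} |F(u*,v_t) − F(u*,v_0)| + ‖u* − u_0‖²/2 + D_n²/(2·t_n) + (1/t_n)·Σ_{t=0}^{t_n−1} ⟨(∇_u F)(u_t,v_t) − (∇_u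 F_t)(u_t,v_t), u_t − u*⟩. -/
/-!
By convexity, `F (u t) (v t) - F u* (v t) ≤ ⟪∇F, u t - u*⟫`, which splits into the
gradient-mismatch term of the bound plus `⟪∇F_t, u t - u*⟫`. Projection onto `A` does not increase
distances to points of `A`, so `‖u (t+1) - u*‖² ≤ ‖u t - u*‖² - 2λ⟪∇F_t, u t - u*⟫ + λ² Dn²`;
these inequalities telescope. Finally `F u* (v t) ≤ F u* (v 0) + |F u* (v t) - F u* (v 0)|`.
-/

open Finset
open scoped RealInnerProductSpace

theorem ConvexOn.add_le_of_hasFDerivAt {E : Type*} [NormedAddCommGroup E] [NormedSpace ℝ E]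
    {S : Set E} {f : E → ℝ} {f' : E →L[ℝ] ℝ} {x y : E} (hf : ConvexOn ℝ S f)
    (hx : x ∈ S) (hy : y ∈ S) (hf' : HasFDerivAt f f' x) :
    f x + f' (y - x) ≤ f y := by
  let ℓ : ℝ →ᵃ[ℝ] E := AffineMap.lineMap x y
  have hℓ : ∀ s : ℝ, ℓ s = x + s • (y - x) := fun s => by
    simp [ℓ, AffineMap.lineMap_apply, vsub_eq_sub, vadd_eq_add, add_comm]
  have hderiv : HasDerivAt (f ∘ ℓ) (f' (y - x)) 0 := by
    have hline : HasDerivAt (fun s : ℝ => x + s • (y - x)) (y - x) 0 := by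
      simpa using ((hasDerivAt_id (0 : ℝ)).smul_const (y - x)).const_add x
    have : HasFDerivAt f f' (x + (0 : ℝ) • (y - x)) := by simpa using hf'
    simpa [Function.comp_def, hℓ] using this.comp_hasDerivAt 0 hline
  have hslope := (hf.comp_affineMap ℓ).le_slope_of_hasDerivAt (x := 0) (y := 1)
    (by simpa [hℓ] using hx) (by simpa [hℓ] using hy) one_pos hderiv
  simp only [slope_def_field, Function.comp_apply, hℓ, zero_smul, one_smul, add_zero,
    add_sub_cancel, sub_zero, div_one] at hslope
  linarith [map_sub f' y x]

theorem ConvexOn.add_inner_le_of_hasGradientAt {E : Type*} [NormedAddCommGroup E]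
    [InnerProductSpace ℝ E] [CompleteSpace E] {S : Set E} {f : E → ℝ} {g x y : E}
    (hf : ConvexOn ℝ S f) (hx : x ∈ S) (hy : y ∈ S) (hg : HasGradientAt f g x) :
    f x + ⟪g, y - x⟫ ≤ f y := by
  simpa using hf.add_le_of_hasFDerivAt hx hy (hasGradientAt_iff_hasFDerivAt.mp hg)

theorem Convex.norm_sub_le_of_isMinOn {E : Type*} [NormedAddCommGroup E]
    [InnerProductSpace ℝ E] {K : Set E} {x p z : E} (hK : Convex ℝ K) (hp : p ∈ K)
    (hmin : IsMinOn (fun w => ‖x - w‖) K p) (hz : z ∈ K) :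
    ‖p - z‖ ≤ ‖x - z‖ := by
  have : Nonempty K := ⟨⟨p, hp⟩⟩
  have hinf : ‖x - p‖ = ⨅ w : K, ‖x - w‖ :=
    le_antisymm (le_ciInf fun w => hmin w.2)
      (ciInf_le ⟨0, by rintro _ ⟨w, rfl⟩; positivity⟩ (⟨p, hp⟩ : K))
  have hobtuse : ⟪x - p, z - p⟫ ≤ 0 := (norm_eq_iInf_iff_real_inner_le_zero hK hp).mp hinf z hz
  have hsplit : ‖x - z‖ ^ 2 = ‖x - p‖ ^ 2 - 2 * ⟪x - p, z - p⟫ + ‖p - z‖ ^ 2 := by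
    rw [show x - z = (x - p) + (p - z) by abel, norm_add_sq_real,
      show p - z = -(z - p) by abel, inner_neg_right, norm_neg]
    ring
  nlinarith [norm_nonneg (p - z), norm_nonneg (x - z), sq_nonneg ‖x - p‖]

theorem inner_le_of_norm_sub_le_norm_sub_smul {E : Type*} [NormedAddCommGroup E]
    [InnerProductSpace ℝ E] {η : ℝ} {x g p z : E} (hη : 0 < η)
    (hp : ‖p - z‖ ≤ ‖x - η • g - z‖) :
    ⟪g, x - z⟫ ≤ (‖x - z‖ ^ 2 - ‖p - z‖ ^ 2) / (2 * η) + η * ‖g‖ ^ 2 / 2 := by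
  have hexpand : ‖x - η • g - z‖ ^ 2 = ‖x - z‖ ^ 2 - 2 * η * ⟪g, x - z⟫ + η ^ 2 * ‖g‖ ^ 2 := by
    rw [show x - η • g - z = (x - z) - η • g by abel, norm_sub_sq_real, real_inner_smul_right,
      norm_smul, Real.norm_of_nonneg hη.le, real_inner_comm]
    ring
  have hsq := pow_le_pow_left₀ (norm_nonneg _) hp 2
  rw [div_add' _ _ _ (by positivity), le_div_iff₀ (by positivity)]
  nlinarith

theorem sum_inner_le_of_norm_sub_le_norm_sub_smul {E : Type*} [NormedAddCommGroup E]
    [InnerProductSpace ℝ E] {η D : ℝ} {n : ℕ} {x g : ℕ → E} {z : E} (hη : 0 < η)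
    (hstep : ∀ t < n, ‖x (t + 1) - z‖ ≤ ‖x t - η • g t - z‖) (hg : ∀ t < n, ‖g t‖ ≤ D) :
    ∑ t ∈ range n, ⟪g t, x t - z⟫ ≤ ‖x 0 - z‖ ^ 2 / (2 * η) + n * (η * D ^ 2 / 2) := by
  have hterm : ∀ t ∈ range n, ⟪g t, x t - z⟫ ≤
      (‖x t - z‖ ^ 2 - ‖x (t + 1) - z‖ ^ 2) / (2 * η) + η * D ^ 2 / 2 := by
    intro t ht
    have ht := mem_range.mp ht
    have hgD : ‖g t‖ ^ 2 ≤ D ^ 2 := pow_le_pow_left₀ (norm_nonneg _) (hg t ht) 2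
    have := inner_le_of_norm_sub_le_norm_sub_smul hη (hstep t ht)
    nlinarith
  calc ∑ t ∈ range n, ⟪g t, x t - z⟫
      ≤ ∑ t ∈ range n, ((‖x t - z‖ ^ 2 - ‖x (t + 1) - z‖ ^ 2) / (2 * η) + η * D ^ 2 / 2) :=
        sum_le_sum hterm
    _ = (‖x 0 - z‖ ^ 2 - ‖x n - z‖ ^ 2) / (2 * η) + n * (η * D ^ 2 / 2) := by
        rw [sum_add_distrib, ← sum_div, sum_range_sub' (fun t => ‖x t - z‖ ^ 2), sum_const,
          card_range, nsmul_eq_mul]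
    _ ≤ ‖x 0 - z‖ ^ 2 / (2 * η) + n * (η * D ^ 2 / 2) := by
        gcongr
        exact sub_le_self _ (sq_nonneg _)

theorem sum_range_le_mul_add_sum_abs_sub (f : ℕ → ℝ) (n : ℕ) :
    ∑ t ∈ range n, f t ≤ n * f 0 + ∑ t ∈ Ico 1 n, |f t - f 0| := by
  have hIco : ∑ t ∈ Ico 1 n, |f t - f 0| = ∑ t ∈ range n, |f t - f 0| := by
    refine sum_subset (fun t ht => mem_range.mpr (mem_Ico.mp ht).2) fun t ht hnot => ?_
    obtain rfl : t = 0 := by simp only [mem_range, mem_Ico] at ht hnot; omega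
    simp
  calc ∑ t ∈ range n, f t = ∑ t ∈ range n, (f 0 + (f t - f 0)) := by simp
    _ ≤ ∑ t ∈ range n, (f 0 + |f t - f 0|) := sum_le_sum fun t _ => by gcongr; exact le_abs_self _
    _ = n * f 0 + ∑ t ∈ Ico 1 n, |f t - f 0| := by
        rw [sum_add_distrib, sum_const, card_range, nsmul_eq_mul, hIco]

theorem statement_3_general
    (l₁ l₂ tn : ℕ) (htn : 0 < tn)
    (Dn : ℝ)
    (A : Set (EuclideanSpace ℝ (Fin l₁))) (hAconv : Convex ℝ A)
    (B : Set (EuclideanSpace ℝ (Fin l₂)))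
    (F : EuclideanSpace ℝ (Fin l₁) → EuclideanSpace ℝ (Fin l₂) → ℝ)
    (Ft : ℕ → EuclideanSpace ℝ (Fin l₁) → EuclideanSpace ℝ (Fin l₂) → ℝ)
    (hFdiff : ∀ v, Differentiable ℝ fun u => F u v)
    (hFconv : ∀ v, ConvexOn ℝ Set.univ fun u => F u v)
    (hFtgrad : ∀ t, t < tn → ∀ u ∈ A, ∀ v ∈ B,
      ‖gradient (fun u' => Ft t u' v) u‖ ≤ Dn)
    (projA : EuclideanSpace ℝ (Fin l₁) → EuclideanSpace ℝ (Fin l₁))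
    (hprojA : ∀ x, projA x ∈ A ∧ ∀ z ∈ A, ‖x - projA x‖ ≤ ‖x - z‖)
    (u : ℕ → EuclideanSpace ℝ (Fin l₁)) (v : ℕ → EuclideanSpace ℝ (Fin l₂))
    (hu0 : u 0 ∈ A) (hv : ∀ t, t ≤ tn → v t ∈ B)
    (hupd : ∀ t, t < tn →
      u (t + 1) = projA (u t - (1 / (tn : ℝ)) • gradient (fun u' => Ft t u' (v t)) (u t)))
    (ustar : EuclideanSpace ℝ (Fin l₁)) (hustar : ustar ∈ A) :
    (1 / (tn : ℝ)) * ∑ t ∈ Finset.range tn, F (u t) (v t)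
      ≤ F ustar (v 0)
        + (1 / (tn : ℝ)) * ∑ t ∈ Finset.Ico 1 tn, |F ustar (v t) - F ustar (v 0)|
        + ‖ustar - u 0‖ ^ 2 / 2
        + Dn ^ 2 / (2 * (tn : ℝ))
        + (1 / (tn : ℝ)) * ∑ t ∈ Finset.range tn,
            ⟪gradient (fun u' => F u' (v t)) (u t)
              - gradient (fun u' => Ft t u' (v t)) (u t), u t - ustar⟫ := by
  set g := fun t => gradient (fun u' => Ft t u' (v t)) (u t)
  set G := fun t => gradient (fun u' => F u' (v t)) (u t)
  have hT : (0 : ℝ) < tn := by exact_mod_cast htn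
  have huA : ∀ t ≤ tn, u t ∈ A := by
    intro t ht
    induction t with
    | zero => exact hu0
    | succ t _ => rw [hupd t ht]; exact (hprojA _).1
  have hconv : ∀ t, F (u t) (v t) ≤
      F ustar (v t) + ⟪G t - g t, u t - ustar⟫ + ⟪g t, u t - ustar⟫ := by
    intro t
    have := (hFconv (v t)).add_inner_le_of_hasGradientAt (Set.mem_univ (u t))
      (Set.mem_univ ustar) (hFdiff (v t) (u t)).hasGradientAt
    rw [← neg_sub, inner_neg_right] at this
    rw [inner_sub_left]
    linarith
  have hregret := sum_inner_le_of_norm_sub_le_norm_sub_smul (x := u) (g := g) (z := ustar)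
    (one_div_pos.mpr hT)
    (fun t ht => by
      rw [hupd t ht]
      exact hAconv.norm_sub_le_of_isMinOn (hprojA _).1 (hprojA _).2 hustar)
    (fun t ht => hFtgrad t ht (u t) (huA t ht.le) (v t) (hv t ht.le))
  have hFstar := sum_range_le_mul_add_sum_abs_sub (fun t => F ustar (v t)) tn
  have hsum := sum_le_sum fun t (_ : t ∈ range tn) => hconv t
  rw [sum_add_distrib, sum_add_distrib] at hsum
  have hηD : (tn : ℝ) * (1 / tn * Dn ^ 2 / 2) = Dn ^ 2 / 2 := by field_simp
  rw [norm_sub_rev, hηD, one_div, div_mul_eq_div_div, div_inv_eq_mul] at hregret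
  have htotal : ∑ t ∈ range tn, F (u t) (v t) ≤ tn * F ustar (v 0)
      + ∑ t ∈ Ico 1 tn, |F ustar (v t) - F ustar (v 0)| + ‖ustar - u 0‖ ^ 2 / 2 * tn
      + Dn ^ 2 / 2 + ∑ t ∈ range tn, ⟪G t - g t, u t - ustar⟫ := by
    linarith
  calc (1 / (tn : ℝ)) * ∑ t ∈ range tn, F (u t) (v t)
      ≤ (1 / (tn : ℝ)) * (tn * F ustar (v 0)
        + ∑ t ∈ Ico 1 tn, |F ustar (v t) - F ustar (v 0)| + ‖ustar - u 0‖ ^ 2 / 2 * tn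
        + Dn ^ 2 / 2 + ∑ t ∈ range tn, ⟪G t - g t, u t - ustar⟫) := by gcongr
    _ = _ := by field_simp; rfl

/-- **Lemma 1** (projected stochastic gradient descent bound).
`projA` is the metric (`L₂`) projection onto the closed convex set `A`,
characterized by membership and distance minimization. -/
theorem statement_3
    (l₁ l₂ tn : ℕ) (hl₁ : 0 < l₁) (hl₂ : 0 < l₂) (htn : 0 < tn)
    (Dn : ℝ) (hDn : 0 ≤ Dn)
    (A : Set (EuclideanSpace ℝ (Fin l₁))) (hAclosed : IsClosed A) (hAconv : Convex ℝ A)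
    (B : Set (EuclideanSpace ℝ (Fin l₂)))
    (F : EuclideanSpace ℝ (Fin l₁) → EuclideanSpace ℝ (Fin l₂) → ℝ)
    (Ft : ℕ → EuclideanSpace ℝ (Fin l₁) → EuclideanSpace ℝ (Fin l₂) → ℝ)
    (hF0 : ∀ u v, 0 ≤ F u v)
    (hFt0 : ∀ t, t < tn → ∀ u v, 0 ≤ Ft t u v)
    (hFdiff : ∀ v, Differentiable ℝ fun u => F u v)
    (hFconv : ∀ v, ConvexOn ℝ Set.univ fun u => F u v)
    (hFtdiff : ∀ t, t < tn → ∀ v, Differentiable ℝ fun u => Ft t u v)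
    (hFtgrad : ∀ t, t < tn → ∀ u ∈ A, ∀ v ∈ B,
      ‖gradient (fun u' => Ft t u' v) u‖ ≤ Dn)
    (projA : EuclideanSpace ℝ (Fin l₁) → EuclideanSpace ℝ (Fin l₁))
    (hprojA : ∀ x, projA x ∈ A ∧ ∀ z ∈ A, ‖x - projA x‖ ≤ ‖x - z‖)
    (u : ℕ → EuclideanSpace ℝ (Fin l₁)) (v : ℕ → EuclideanSpace ℝ (Fin l₂))
    (hu0 : u 0 ∈ A) (hv : ∀ t, t ≤ tn → v t ∈ B)
    (hupd : ∀ t, t < tn →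
      u (t + 1) = projA (u t - (1 / (tn : ℝ)) • gradient (fun u' => Ft t u' (v t)) (u t)))
    (ustar : EuclideanSpace ℝ (Fin l₁)) (hustar : ustar ∈ A) :
    (1 / (tn : ℝ)) * ∑ t ∈ Finset.range tn, F (u t) (v t)
      ≤ F ustar (v 0)
        + (1 / (tn : ℝ)) * ∑ t ∈ Finset.Ico 1 tn, |F ustar (v t) - F ustar (v 0)|
        + ‖ustar - u 0‖ ^ 2 / 2
        + Dn ^ 2 / (2 * (tn : ℝ))
        + (1 / (tn : ℝ)) * ∑ t ∈ Finset.range tn,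
            ⟪gradient (fun u' => F u' (v t)) (u t)
              - gradient (fun u' => Ft t u' (v t)) (u t), u t - ustar⟫ :=
  statement_3_general l₁ l₂ tn htn Dn A hAconv B F Ft hFdiff hFconv hFtgrad projA hprojA u v hu0 hv
    hupd ustar hustar
end

section
/- Let d_1, d_2, t ∈ ℕ and l ∈ ℕ with 2^l ≤ min{d_1,d_2}, set I = {0,...,2^l−1}×{0,...,2^l−1}. For a ∈ {1,...,t}, let m_a(x) = max_{(i,j): (i,j)+I ⊆ {1,...,d_1}×{1,...,d_2}} f_a(x_{(i,j)+I}) and m̄_a(x) = max_{(i,j): (i,j)+I ⊆ {1,...,d_1}×{1,...,d_2}} f̄_a(x_{(i,j)+I}), where f_a and f̄_a are defined by hierarchical compositions of level l with component functions g^{(a)}_{k,s}: ℝ⁴ → [0,1] and ḡ^{(a)}_{k,s}: ℝ⁴ → ℝ respectively (k = 1,...,l, s = 1,...,4^{l−k}). Let g: ℝ^t → [0,1] and ḡ: ℝ^t → ℝ. Assume all restrictions g^{(a)}_{k,s}|_{[−2,2]⁴} and g|_{[−2,2]^t} are Lipschitz continuous with respect to the Euclidean distance with Lipschitz constant C > 0,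 and ‖ḡ^{(a)}_{k,s}‖_{∞,[−2,2]⁴} ≤ 2 for all a,k,s. Then for any x ∈ [0,1]^{{1,...,d_1}×{1,...,d_2}}: |g(m_1(x),...,m_t(x)) − ḡ(m̄_1(x),...,m̄_t(x))| ≤ √t·(2C+1)^l · max over a ∈ {1,...,t}, j ∈ {1,...,l}, s ∈ {1,...,4^{l−j}} of { ‖g^{(a)}_{j,s} − ḡ^{(a)}_{j,s}‖_{∞,[−2,2]⁴}, ‖g − ḡ‖_{∞,[−2,2]^t} }. -/
open Finset

noncomputable section

/-- The hierarchical composition of level `m + 1` with component functions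
`g k s : ℝ⁴ → ℝ`: `hcomp g m s x` is the value `f_{m+1,s}(x)` on the input array
`x : {1,…,2^{m+1}}² → ℝ`, built recursively from the four quadrant restrictions. -/
def hcomp (g : ℕ → ℕ → ℝ → ℝ → ℝ → ℝ → ℝ) : ℕ → ℕ → (ℕ → ℕ → ℝ) → ℝ
  | 0, s, x => g 1 s (x 1 1) (x 1 2) (x 2 1) (x 2 2)
  | (m + 1), s, x =>
      g (m + 2) s
        (hcomp g m (4 * (s - 1) + 1) x)
        (hcomp g m (4 * (s - 1) + 2) (fun i j => x i (j + 2 ^ (m + 1))))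
        (hcomp g m (4 * (s - 1) + 3) (fun i j => x (i + 2 ^ (m + 1)) j))
        (hcomp g m (4 * s) (fun i j => x (i + 2 ^ (m + 1)) (j + 2 ^ (m + 1))))

/-- The hierarchical composition `f = f_{l,1}` of level `l` built from `g`. -/
def hierF (g : ℕ → ℕ → ℝ → ℝ → ℝ → ℝ → ℝ) (l : ℕ) : (ℕ → ℕ → ℝ) → ℝ :=
  hcomp g (l - 1) 1

/-- Max-pooling of `f` with index set `I = {0,…,2^l - 1}²` over an image of size
`d₁ × d₂`: the maximum of `f (x_{(i,j)+I})` over all admissible positions `(i,j)`. -/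
def mpool (d₁ d₂ l : ℕ) (f : (ℕ → ℕ → ℝ) → ℝ) (x : ℕ → ℕ → ℝ) : ℝ :=
  sSup ((fun ij : ℕ × ℕ => f (fun u v => x (ij.1 + u - 1) (ij.2 + v - 1))) ''
    (Set.Icc 1 (d₁ - 2 ^ l + 1) ×ˢ Set.Icc 1 (d₂ - 2 ^ l + 1)))

private lemma sSup_image_mem_Icc' {α : Type*} {S : Set α} (hne : S.Nonempty)
    (f : α → ℝ) (lo hi : ℝ) (h : ∀ y ∈ S, f y ∈ Set.Icc lo hi) :
    sSup (f '' S) ∈ Set.Icc lo hi := by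
  obtain ⟨y0, hy0⟩ := hne
  have hbdd : BddAbove (f '' S) := ⟨hi, by rintro _ ⟨y, hy, rfl⟩; exact (h y hy).2⟩
  refine ⟨le_trans (h y0 hy0).1 (le_csSup hbdd ⟨y0, hy0, rfl⟩), ?_⟩
  exact csSup_le ⟨f y0, ⟨y0, hy0, rfl⟩⟩ (by rintro _ ⟨y, hy, rfl⟩; exact (h y hy).2)

private lemma sSup_image_diff' {α : Type*} {S : Set α} (hne : S.Nonempty)
    (f fb : α → ℝ) (δ : ℝ)
    (hf : BddAbove (f '' S)) (hfb : BddAbove (fb '' S))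
    (h : ∀ y ∈ S, |f y - fb y| ≤ δ) :
    |sSup (f '' S) - sSup (fb '' S)| ≤ δ := by
  rw [abs_sub_le_iff]
  constructor
  · rw [sub_le_iff_le_add]
    refine csSup_le (hne.image f) ?_
    rintro _ ⟨y, hy, rfl⟩
    have h1 := (abs_le.1 (h y hy)).2
    have h2 := le_csSup hfb ⟨y, hy, rfl⟩
    linarith
  · rw [sub_le_iff_le_add]
    refine csSup_le (hne.image fb) ?_
    rintro _ ⟨y, hy, rfl⟩
    have h1 := (abs_le.1 (h y hy)).1
    have h2 := le_csSup hf ⟨y, hy, rfl⟩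
    linarith

set_option maxHeartbeats 2000000 in
/-- **Lemma 4** (error propagation in hierarchical max-pooling models): if the component
functions `g^{(a)}_{k,s}` and the outer function `g` are Lipschitz (constant `C`) on
`[-2,2]⁴` resp. `[-2,2]^t` and the perturbed components `ḡ^{(a)}_{k,s}` are bounded by `2`
there, then for every `x ∈ [0,1]^{d₁×d₂}`,
`|g(m₁(x),…,m_t(x)) - ḡ(m̄₁(x),…,m̄_t(x))| ≤ √t · (2C+1)^l · max {sup-norm distances}`
(the maximal sup-norm distance being encoded by any common bound `ε`). -/
theorem statement_8 (d₁ d₂ t l : ℕ) (ht : 0 < t) (hl : 0 < l)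
    (h2l : 2 ^ l ≤ min d₁ d₂) (C : ℝ) (hC : 0 < C)
    (g gb : ℕ → ℕ → ℕ → ℝ → ℝ → ℝ → ℝ → ℝ)
    (gout gbout : (ℕ → ℝ) → ℝ)
    (hgrange : ∀ a k s u1 u2 u3 u4, g a k s u1 u2 u3 u4 ∈ Set.Icc (0 : ℝ) 1)
    (hgoutrange : ∀ u, gout u ∈ Set.Icc (0 : ℝ) 1)
    (hglip : ∀ a ∈ Finset.Icc 1 t, ∀ k ∈ Finset.Icc 1 l, ∀ s ∈ Finset.Icc 1 (4 ^ (l - k)),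
      ∀ u1 u2 u3 u4 w1 w2 w3 w4 : ℝ,
        u1 ∈ Set.Icc (-2 : ℝ) 2 → u2 ∈ Set.Icc (-2 : ℝ) 2 → u3 ∈ Set.Icc (-2 : ℝ) 2 →
        u4 ∈ Set.Icc (-2 : ℝ) 2 → w1 ∈ Set.Icc (-2 : ℝ) 2 → w2 ∈ Set.Icc (-2 : ℝ) 2 →
        w3 ∈ Set.Icc (-2 : ℝ) 2 → w4 ∈ Set.Icc (-2 : ℝ) 2 →
        |g a k s u1 u2 u3 u4 - g a k s w1 w2 w3 w4| ≤
          C * Real.sqrt ((u1 - w1) ^ 2 + (u2 - w2) ^ 2 + (u3 - w3) ^ 2 + (u4 - w4) ^ 2))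
    (hgoutlip : ∀ u w : ℕ → ℝ,
      (∀ i ∈ Finset.Icc 1 t, u i ∈ Set.Icc (-2 : ℝ) 2) →
      (∀ i ∈ Finset.Icc 1 t, w i ∈ Set.Icc (-2 : ℝ) 2) →
      |gout u - gout w| ≤ C * Real.sqrt (∑ i ∈ Finset.Icc 1 t, (u i - w i) ^ 2))
    (hgbbound : ∀ a ∈ Finset.Icc 1 t, ∀ k ∈ Finset.Icc 1 l, ∀ s ∈ Finset.Icc 1 (4 ^ (l - k)),
      ∀ u1 u2 u3 u4 : ℝ,
        u1 ∈ Set.Icc (-2 : ℝ) 2 → u2 ∈ Set.Icc (-2 : ℝ) 2 → u3 ∈ Set.Icc (-2 : ℝ) 2 →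
        u4 ∈ Set.Icc (-2 : ℝ) 2 → |gb a k s u1 u2 u3 u4| ≤ 2)
    (ε : ℝ)
    (hclose : ∀ a ∈ Finset.Icc 1 t, ∀ k ∈ Finset.Icc 1 l, ∀ s ∈ Finset.Icc 1 (4 ^ (l - k)),
      ∀ u1 u2 u3 u4 : ℝ,
        u1 ∈ Set.Icc (-2 : ℝ) 2 → u2 ∈ Set.Icc (-2 : ℝ) 2 → u3 ∈ Set.Icc (-2 : ℝ) 2 →
        u4 ∈ Set.Icc (-2 : ℝ) 2 →
        |g a k s u1 u2 u3 u4 - gb a k s u1 u2 u3 u4| ≤ ε)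
    (hcloseout : ∀ u : ℕ → ℝ, (∀ i ∈ Finset.Icc 1 t, u i ∈ Set.Icc (-2 : ℝ) 2) →
      |gout u - gbout u| ≤ ε)
    (x : ℕ → ℕ → ℝ)
    (hx : ∀ i ∈ Finset.Icc 1 d₁, ∀ j ∈ Finset.Icc 1 d₂, x i j ∈ Set.Icc (0 : ℝ) 1) :
    |gout (fun a => mpool d₁ d₂ l (hierF (g a) l) x) -
        gbout (fun a => mpool d₁ d₂ l (hierF (gb a) l) x)|
      ≤ Real.sqrt t * (2 * C + 1) ^ l * ε := by
  obtain ⟨p, rfl⟩ : ∃ p, l = p + 1 := ⟨l - 1, by omega⟩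
  have hε : 0 ≤ ε := by
    have h0 : (0:ℝ) ∈ Set.Icc (-2:ℝ) 2 := by constructor <;> norm_num
    have := hclose 1 (Finset.mem_Icc.2 ⟨le_refl 1, ht⟩) 1
      (Finset.mem_Icc.2 ⟨le_refl 1, by omega⟩) 1
      (Finset.mem_Icc.2 ⟨le_refl 1, Nat.one_le_pow _ _ (by norm_num)⟩)
      0 0 0 0 h0 h0 h0 h0
    exact le_trans (abs_nonneg _) this
  have hC1 : (1:ℝ) ≤ 2 * C + 1 := by linarith
  have hginrange : ∀ a m s y, hcomp (g a) m s y ∈ Set.Icc (0:ℝ) 1 := by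
    intro a m s y
    cases m with
    | zero => simp only [hcomp]; exact hgrange a 1 s _ _ _ _
    | succ n => simp only [hcomp]; exact hgrange a (n+2) s _ _ _ _
  -- the key induction over levels
  have key : ∀ m, m + 1 ≤ p + 1 → ∀ a ∈ Finset.Icc 1 t, ∀ s ∈ Finset.Icc 1 (4 ^ (p - m)),
      ∀ y : ℕ → ℕ → ℝ,
      (∀ u ∈ Finset.Icc 1 (2 ^ (m + 1)), ∀ v ∈ Finset.Icc 1 (2 ^ (m + 1)),
        y u v ∈ Set.Icc (-2:ℝ) 2) →
      |hcomp (gb a) m s y| ≤ 2 ∧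
        |hcomp (g a) m s y - hcomp (gb a) m s y| ≤ (2 * C + 1) ^ m * ε := by
    intro m
    induction m with
    | zero =>
      intro _ a ha s hs y hy
      have hs' : s ∈ Finset.Icc 1 (4 ^ (p + 1 - 1)) := by
        rw [show p + 1 - 1 = p - 0 from by omega]; exact hs
      have hk1 : (1:ℕ) ∈ Finset.Icc 1 (p+1) := Finset.mem_Icc.2 ⟨le_refl 1, by omega⟩
      have h11 := hy 1 (by rw [Finset.mem_Icc]; omega) 1 (by rw [Finset.mem_Icc]; omega)
      have h12 := hy 1 (by rw [Finset.mem_Icc]; omega) 2 (by rw [Finset.mem_Icc]; omega)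
      have h21 := hy 2 (by rw [Finset.mem_Icc]; omega) 1 (by rw [Finset.mem_Icc]; omega)
      have h22 := hy 2 (by rw [Finset.mem_Icc]; omega) 2 (by rw [Finset.mem_Icc]; omega)
      constructor
      · simp only [hcomp]
        exact hgbbound a ha 1 hk1 s hs' _ _ _ _ h11 h12 h21 h22
      · simp only [hcomp, pow_zero, one_mul]
        exact hclose a ha 1 hk1 s hs' _ _ _ _ h11 h12 h21 h22
    | succ n ih =>
      intro hm a ha s hs y hy
      have hm' : n + 1 ≤ p + 1 := by omega
      rw [Finset.mem_Icc] at hs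
      have hsub : ∀ r, 1 ≤ r → r ≤ 4 → 4 * (s - 1) + r ∈ Finset.Icc 1 (4 ^ (p - n)) := by
        intro r h1 h4
        have he : p - n = (p - (n+1)) + 1 := by omega
        rw [Finset.mem_Icc, he, pow_succ]
        omega
      have hs4 : 4 * s ∈ Finset.Icc 1 (4 ^ (p - n)) := by
        have he : p - n = (p - (n+1)) + 1 := by omega
        rw [Finset.mem_Icc, he, pow_succ]
        omega
      have hy1 : ∀ u ∈ Finset.Icc 1 (2^(n+1)), ∀ v ∈ Finset.Icc 1 (2^(n+1)),
          y u v ∈ Set.Icc (-2:ℝ) 2 := by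
        intro u hu v hv
        rw [Finset.mem_Icc] at hu hv
        exact hy u (by rw [Finset.mem_Icc]; omega) v (by rw [Finset.mem_Icc]; omega)
      have hy2 : ∀ u ∈ Finset.Icc 1 (2^(n+1)), ∀ v ∈ Finset.Icc 1 (2^(n+1)),
          y u (v + 2^(n+1)) ∈ Set.Icc (-2:ℝ) 2 := by
        intro u hu v hv
        rw [Finset.mem_Icc] at hu hv
        exact hy u (by rw [Finset.mem_Icc]; omega) _ (by rw [Finset.mem_Icc]; omega)
      have hy3 : ∀ u ∈ Finset.Icc 1 (2^(n+1)), ∀ v ∈ Finset.Icc 1 (2^(n+1)),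
          y (u + 2^(n+1)) v ∈ Set.Icc (-2:ℝ) 2 := by
        intro u hu v hv
        rw [Finset.mem_Icc] at hu hv
        exact hy _ (by rw [Finset.mem_Icc]; omega) v (by rw [Finset.mem_Icc]; omega)
      have hy4 : ∀ u ∈ Finset.Icc 1 (2^(n+1)), ∀ v ∈ Finset.Icc 1 (2^(n+1)),
          y (u + 2^(n+1)) (v + 2^(n+1)) ∈ Set.Icc (-2:ℝ) 2 := by
        intro u hu v hv
        rw [Finset.mem_Icc] at hu hv
        exact hy _ (by rw [Finset.mem_Icc]; omega) _ (by rw [Finset.mem_Icc]; omega)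
      obtain ⟨hb1, hc1⟩ := ih hm' a ha _ (hsub 1 (by norm_num) (by norm_num)) y hy1
      obtain ⟨hb2, hc2⟩ := ih hm' a ha _ (hsub 2 (by norm_num) (by norm_num))
        (fun i j => y i (j + 2^(n+1))) hy2
      obtain ⟨hb3, hc3⟩ := ih hm' a ha _ (hsub 3 (by norm_num) (by norm_num))
        (fun i j => y (i + 2^(n+1)) j) hy3
      obtain ⟨hb4, hc4⟩ := ih hm' a ha _ hs4
        (fun i j => y (i + 2^(n+1)) (j + 2^(n+1))) hy4
      set A1 := hcomp (g a) n (4*(s-1)+1) y with hA1d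
      set A2 := hcomp (g a) n (4*(s-1)+2) (fun i j => y i (j + 2^(n+1))) with hA2d
      set A3 := hcomp (g a) n (4*(s-1)+3) (fun i j => y (i + 2^(n+1)) j) with hA3d
      set A4 := hcomp (g a) n (4*s) (fun i j => y (i + 2^(n+1)) (j + 2^(n+1))) with hA4d
      set B1 := hcomp (gb a) n (4*(s-1)+1) y with hB1d
      set B2 := hcomp (gb a) n (4*(s-1)+2) (fun i j => y i (j + 2^(n+1))) with hB2d
      set B3 := hcomp (gb a) n (4*(s-1)+3) (fun i j => y (i + 2^(n+1)) j) with hB3d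
      set B4 := hcomp (gb a) n (4*s) (fun i j => y (i + 2^(n+1)) (j + 2^(n+1))) with hB4d
      have hA1r := hginrange a n (4*(s-1)+1) y
      have hA2r := hginrange a n (4*(s-1)+2) (fun i j => y i (j + 2^(n+1)))
      have hA3r := hginrange a n (4*(s-1)+3) (fun i j => y (i + 2^(n+1)) j)
      have hA4r := hginrange a n (4*s) (fun i j => y (i + 2^(n+1)) (j + 2^(n+1)))
      rw [← hA1d] at hA1r; rw [← hA2d] at hA2r; rw [← hA3d] at hA3r; rw [← hA4d] at hA4r
      have hA1m : A1 ∈ Set.Icc (-2:ℝ) 2 := ⟨by linarith [hA1r.1], by linarith [hA1r.2]⟩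
      have hA2m : A2 ∈ Set.Icc (-2:ℝ) 2 := ⟨by linarith [hA2r.1], by linarith [hA2r.2]⟩
      have hA3m : A3 ∈ Set.Icc (-2:ℝ) 2 := ⟨by linarith [hA3r.1], by linarith [hA3r.2]⟩
      have hA4m : A4 ∈ Set.Icc (-2:ℝ) 2 := ⟨by linarith [hA4r.1], by linarith [hA4r.2]⟩
      have hB1m : B1 ∈ Set.Icc (-2:ℝ) 2 := ⟨(abs_le.1 hb1).1, (abs_le.1 hb1).2⟩
      have hB2m : B2 ∈ Set.Icc (-2:ℝ) 2 := ⟨(abs_le.1 hb2).1, (abs_le.1 hb2).2⟩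
      have hB3m : B3 ∈ Set.Icc (-2:ℝ) 2 := ⟨(abs_le.1 hb3).1, (abs_le.1 hb3).2⟩
      have hB4m : B4 ∈ Set.Icc (-2:ℝ) 2 := ⟨(abs_le.1 hb4).1, (abs_le.1 hb4).2⟩
      have hk2 : n + 2 ∈ Finset.Icc 1 (p+1) := by rw [Finset.mem_Icc]; omega
      have hs'' : s ∈ Finset.Icc 1 (4 ^ (p + 1 - (n + 2))) := by
        rw [Finset.mem_Icc]
        have he : p + 1 - (n+2) = p - (n+1) := by omega
        rw [he]
        exact hs
      constructor
      · simp only [hcomp]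
        exact hgbbound a ha (n+2) hk2 s hs'' _ _ _ _ hB1m hB2m hB3m hB4m
      · simp only [hcomp]
        have hlip := hglip a ha (n+2) hk2 s hs'' A1 A2 A3 A4 B1 B2 B3 B4
          hA1m hA2m hA3m hA4m hB1m hB2m hB3m hB4m
        have hcl := hclose a ha (n+2) hk2 s hs'' B1 B2 B3 B4 hB1m hB2m hB3m hB4m
        set D := (2*C+1)^n * ε with hDd
        have hD0 : 0 ≤ D := mul_nonneg (pow_nonneg (by linarith) n) hε
        have hsq : Real.sqrt ((A1-B1)^2 + (A2-B2)^2 + (A3-B3)^2 + (A4-B4)^2) ≤ 2 * D := by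
          have e1 : (A1-B1)^2 ≤ D^2 := sq_le_sq' (by linarith [(abs_le.1 hc1).1]) (abs_le.1 hc1).2
          have e2 : (A2-B2)^2 ≤ D^2 := sq_le_sq' (by linarith [(abs_le.1 hc2).1]) (abs_le.1 hc2).2
          have e3 : (A3-B3)^2 ≤ D^2 := sq_le_sq' (by linarith [(abs_le.1 hc3).1]) (abs_le.1 hc3).2
          have e4 : (A4-B4)^2 ≤ D^2 := sq_le_sq' (by linarith [(abs_le.1 hc4).1]) (abs_le.1 hc4).2
          have h4 : (A1-B1)^2 + (A2-B2)^2 + (A3-B3)^2 + (A4-B4)^2 ≤ (2*D)^2 := by nlinarith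
          calc Real.sqrt ((A1-B1)^2 + (A2-B2)^2 + (A3-B3)^2 + (A4-B4)^2)
              ≤ Real.sqrt ((2*D)^2) := Real.sqrt_le_sqrt h4
            _ = 2*D := Real.sqrt_sq (by linarith)
        have h1le : (1:ℝ) ≤ (2*C+1)^n := one_le_pow₀ hC1
        calc |g a (n+2) s A1 A2 A3 A4 - gb a (n+2) s B1 B2 B3 B4|
            ≤ |g a (n+2) s A1 A2 A3 A4 - g a (n+2) s B1 B2 B3 B4| +
              |g a (n+2) s B1 B2 B3 B4 - gb a (n+2) s B1 B2 B3 B4| := abs_sub_le _ _ _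
          _ ≤ C * (2*D) + ε :=
              add_le_add (le_trans hlip (mul_le_mul_of_nonneg_left hsq hC.le)) hcl
          _ ≤ (2*C+1)^(n+1) * ε := by
              rw [pow_succ, hDd]
              nlinarith [h1le, hε, hC.le]
  -- max-pooling level
  have h2d1 : 2^(p+1) ≤ d₁ := le_trans h2l (min_le_left _ _)
  have h2d2 : 2^(p+1) ≤ d₂ := le_trans h2l (min_le_right _ _)
  have hSne : (Set.Icc 1 (d₁ - 2^(p+1) + 1) ×ˢ Set.Icc 1 (d₂ - 2^(p+1) + 1) :
      Set (ℕ × ℕ)).Nonempty :=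
    ⟨(1,1), ⟨Set.mem_Icc.2 ⟨le_refl 1, by omega⟩, Set.mem_Icc.2 ⟨le_refl 1, by omega⟩⟩⟩
  have hshift : ∀ ij ∈ (Set.Icc 1 (d₁ - 2^(p+1) + 1) ×ˢ Set.Icc 1 (d₂ - 2^(p+1) + 1) :
      Set (ℕ × ℕ)), ∀ u ∈ Finset.Icc 1 (2^(p+1)), ∀ v ∈ Finset.Icc 1 (2^(p+1)),
      x (ij.1 + u - 1) (ij.2 + v - 1) ∈ Set.Icc (-2:ℝ) 2 := by
    rintro ⟨i,j⟩ ⟨hi, hj⟩ u hu v hv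
    rw [Set.mem_Icc] at hi hj
    rw [Finset.mem_Icc] at hu hv
    have := hx (i + u - 1) (by rw [Finset.mem_Icc]; omega) (j + v - 1)
      (by rw [Finset.mem_Icc]; omega)
    exact ⟨by linarith [this.1], by linarith [this.2]⟩
  have hmem1 : (1:ℕ) ∈ Finset.Icc 1 (4 ^ (p - p)) := by simp
  set U : ℕ → ℝ := fun a => mpool d₁ d₂ (p+1) (hierF (g a) (p+1)) x with hUd
  set W : ℕ → ℝ := fun a => mpool d₁ d₂ (p+1) (hierF (gb a) (p+1)) x with hWd
  have hUrange : ∀ a, U a ∈ Set.Icc (0:ℝ) 1 := by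
    intro a
    rw [hUd]
    simp only [mpool, hierF]
    exact sSup_image_mem_Icc' hSne _ 0 1 (fun y _ => hginrange a _ 1 _)
  have hWm : ∀ a ∈ Finset.Icc 1 t, W a ∈ Set.Icc (-2:ℝ) 2 := by
    intro a ha
    rw [hWd]
    simp only [mpool, hierF]
    refine sSup_image_mem_Icc' hSne _ (-2) 2 (fun ij hij => ?_)
    have := (key p le_rfl a ha 1 hmem1 (fun u v => x (ij.1 + u - 1) (ij.2 + v - 1))
      (hshift ij hij)).1
    exact ⟨(abs_le.1 this).1, (abs_le.1 this).2⟩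
  have hUW : ∀ a ∈ Finset.Icc 1 t, |U a - W a| ≤ (2*C+1)^p * ε := by
    intro a ha
    rw [hUd, hWd]
    simp only [mpool, hierF]
    refine sSup_image_diff' hSne _ _ _ ?_ ?_ (fun ij hij => ?_)
    · exact ⟨1, by rintro _ ⟨y, hy, rfl⟩; exact (hginrange a _ 1 _).2⟩
    · refine ⟨2, ?_⟩
      rintro _ ⟨ij, hij, rfl⟩
      exact (abs_le.1 (key p le_rfl a ha 1 hmem1
        (fun u v => x (ij.1 + u - 1) (ij.2 + v - 1)) (hshift ij hij)).1).2
    · exact (key p le_rfl a ha 1 hmem1 (fun u v => x (ij.1 + u - 1) (ij.2 + v - 1))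
        (hshift ij hij)).2
  have hUm : ∀ i ∈ Finset.Icc 1 t, U i ∈ Set.Icc (-2:ℝ) 2 := fun i _ =>
    ⟨by linarith [(hUrange i).1], by linarith [(hUrange i).2]⟩
  have hlipout := hgoutlip U W hUm hWm
  have hclout := hcloseout W hWm
  have hD'0 : (0:ℝ) ≤ (2*C+1)^p * ε := mul_nonneg (pow_nonneg (by linarith) p) hε
  have hsum : ∑ i ∈ Finset.Icc 1 t, (U i - W i)^2 ≤ t * ((2*C+1)^p * ε)^2 := by
    calc ∑ i ∈ Finset.Icc 1 t, (U i - W i)^2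
        ≤ ∑ i ∈ Finset.Icc 1 t, ((2*C+1)^p * ε)^2 := by
          refine Finset.sum_le_sum (fun i hi => ?_)
          exact sq_le_sq' (by linarith [(abs_le.1 (hUW i hi)).1]) (abs_le.1 (hUW i hi)).2
      _ = t * ((2*C+1)^p * ε)^2 := by
          rw [Finset.sum_const, Nat.card_Icc]
          simp [nsmul_eq_mul]
  have hst : (1:ℝ) ≤ Real.sqrt t := by
    rw [show (1:ℝ) = Real.sqrt 1 from Real.sqrt_one.symm]
    exact Real.sqrt_le_sqrt (by exact_mod_cast ht)
  have hsqrt : Real.sqrt (∑ i ∈ Finset.Icc 1 t, (U i - W i)^2) ≤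
      Real.sqrt t * ((2*C+1)^p * ε) := by
    calc Real.sqrt (∑ i ∈ Finset.Icc 1 t, (U i - W i)^2)
        ≤ Real.sqrt (t * ((2*C+1)^p * ε)^2) := Real.sqrt_le_sqrt hsum
      _ = Real.sqrt t * ((2*C+1)^p * ε) := by
          rw [Real.sqrt_mul (by positivity), Real.sqrt_sq hD'0]
  have hεD : ε ≤ (2*C+1)^p * ε := by nlinarith [one_le_pow₀ hC1 (n := p), hε]
  calc |gout U - gbout W|
      ≤ |gout U - gout W| + |gout W - gbout W| := abs_sub_le _ _ _
    _ ≤ C * (Real.sqrt t * ((2*C+1)^p * ε)) + ε :=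
        add_le_add (le_trans hlipout (mul_le_mul_of_nonneg_left hsqrt hC.le)) hclout
    _ ≤ Real.sqrt t * (2*C+1)^(p+1) * ε := by
        rw [pow_succ]
        nlinarith [hst, hD'0, hεD, hC.le,
          mul_nonneg (sub_nonneg.2 hst) hD'0]
end
end

section
/- Let d_1, d_2, l ∈ ℕ with 2^l ≤ min{d_1,d_2}. For k ∈ {1,...,l} and s ∈ {1,...,4^{l−k}} let ḡ_{net,k,s}: ℝ⁴ → ℝ be a feedforward ReLU network with L_{net} hidden layers and r_{net} neurons per hidden layer, all of whose weights are bounded in absolute value by some B_n ≥ 1. Set I = {0,...,2^l−1}×{0,...,2^l−1} and define m̄(x) = max_{(i,j): (i,j)+I ⊆ {1,...,d_1}×{1,...,d_2}} f̄(x_{(i,j)+I}), where f̄ = f̄_{l,1} is the hierarchical composition of level l built from the ḡ_{net,k,s}. Set l_{net} = ((4^l−1)/3)·L_{net} + l, k_s = (2·4^l+4)/3 + r_{net} for s = 1,...,l_{net}, and M_s = 2^{π(s)} where π(s) = Σ_{i=1}^l 1_{{s ≥ i + Σ_{r=l−i+1}^{l−1} 4^r·L_{net}}}. Then there exists a convolutional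 network m_{net} ∈ F^{CNN}_{l_{net},k,M}, all of whose weights are bounded in absolute value by B_n, such that m̄(x) = m_{net}(x) for all x ∈ [−2,2]^{{1,...,d_1}×{1,...,d_2}}. -/
open Finset

noncomputable section

/-! ### Feedforward ReLU networks -/

/-- Output `g_i^{(l)}(x)` of neuron `i` in layer `l` of a feedforward ReLU network with
input dimension `d`, `r` neurons per hidden layer and weights `v l i j = v_{i,j}^{(l)}`. -/
def fnnNeuron (d r : ℕ) (v : ℕ → ℕ → ℕ → ℝ) (x : ℕ → ℝ) : ℕ → ℕ → ℝ
  | 0, j => x j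
  | (l + 1), i =>
      max 0 (v l i 0 +
        ∑ j ∈ Finset.Icc 1 (if l = 0 then d else r), v l i j * fnnNeuron d r v x l j)

/-- Output of the feedforward ReLU network with `L` hidden layers of `r` neurons each. -/
def fnnEval (d r L : ℕ) (v : ℕ → ℕ → ℕ → ℝ) (x : ℕ → ℝ) : ℝ :=
  v L 1 0 + ∑ i ∈ Finset.Icc 1 r, v L 1 i * fnnNeuron d r v x L i

/-- The indices `(l, i, j)` of the weights actually used by a network in `F(L,r)` with
input dimension `d`. -/
def RelW (d r L : ℕ) (l i j : ℕ) : Prop :=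
  (l < L ∧ 1 ≤ i ∧ i ≤ r ∧ j ≤ (if l = 0 then d else r)) ∨
    (l = L ∧ i = 1 ∧ j ≤ (if L = 0 then d else r))

/-- The input vector `(u₁, u₂, u₃, u₄)` as a function on coordinates `1, 2, 3, 4`. -/
def quad (u1 u2 u3 u4 : ℝ) : ℕ → ℝ :=
  fun j => if j = 1 then u1 else if j = 2 then u2 else if j = 3 then u3 else
    if j = 4 then u4 else 0

/-! ### Convolutional networks -/

/-- The weights of a convolutional neural network (with max-pooling output):
convolution weights `cw`, biases `cb` and output weights `co`. -/
structure CNNParams where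
  cw : ℕ → ℕ → ℕ → ℕ → ℕ → ℝ
  cb : ℕ → ℕ → ℝ
  co : ℕ → ℝ

/-- Feature maps `o_{(i,j),s}^{(r)}` of the CNN: channels `kc`, filter sizes `M`, ReLU
activation and zero padding. -/
def featMap (d₁ d₂ : ℕ) (kc M : ℕ → ℕ) (p : CNNParams) (x : ℕ → ℕ → ℝ) :
    ℕ → ℕ → ℕ → ℕ → ℝ
  | 0, i, j, s => if s = 1 then x i j else 0
  | (r + 1), i, j, s₂ =>
      max 0 (p.cb (r + 1) s₂ +
        ∑ s₁ ∈ Finset.Icc 1 (kc r), ∑ t₁ ∈ Finset.Icc 1 (M (r + 1)),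
          ∑ t₂ ∈ Finset.Icc 1 (M (r + 1)),
            if i + t₁ - 1 ≤ d₁ ∧ j + t₂ - 1 ≤ d₂ then
              p.cw (r + 1) t₁ t₂ s₁ s₂ *
                featMap d₁ d₂ kc M p x r (i + t₁ - 1) (j + t₂ - 1) s₁
            else 0)

/-- Output of the convolutional network (class `F^{CNN}_{L,k,M}`). -/
def cnnOut (d₁ d₂ L : ℕ) (kc M : ℕ → ℕ) (p : CNNParams) (x : ℕ → ℕ → ℝ) : ℝ :=
  sSup ((fun ij : ℕ × ℕ =>
      ∑ s ∈ Finset.Icc 1 (kc L), p.co s * featMap d₁ d₂ kc M p x L ij.1 ij.2 s) ''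
    (Set.Icc 1 (d₁ - M L + 1) ×ˢ Set.Icc 1 (d₂ - M L + 1)))

/-- All (used) weights of the CNN `p` are bounded in absolute value by `B`. -/
def CNNWeightsBound (L : ℕ) (kc M : ℕ → ℕ) (p : CNNParams) (B : ℝ) : Prop :=
  (∀ r ∈ Finset.Icc 1 L, ∀ t₁ ∈ Finset.Icc 1 (M r), ∀ t₂ ∈ Finset.Icc 1 (M r),
    ∀ s₁ ∈ Finset.Icc 1 (kc (r - 1)), ∀ s₂ ∈ Finset.Icc 1 (kc r),
      |p.cw r t₁ t₂ s₁ s₂| ≤ B) ∧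
  (∀ r ∈ Finset.Icc 1 L, ∀ s₂ ∈ Finset.Icc 1 (kc r), |p.cb r s₂| ≤ B) ∧
  (∀ s ∈ Finset.Icc 1 (kc L), |p.co s| ≤ B)

/-- The function `π(s) = ∑_{i=1}^{l} 1_{{s ≥ i + ∑_{r=l-i+1}^{l-1} 4^r · L_net}}`
determining the filter sizes `M_s = 2^{π(s)}`. -/
def pifun (l Lnet s : ℕ) : ℕ :=
  ∑ i ∈ Finset.Icc 1 l,
    if i + ∑ r ∈ Finset.Icc (l - i + 1) (l - 1), 4 ^ r * Lnet ≤ s then 1 else 0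

namespace CNN6

/-! ### Tree counting arithmetic -/

/-- `A l k = ∑_{j=1}^{k} 4^{l-j}`. -/
def A (l k : ℕ) : ℕ := ∑ j ∈ Finset.Icc 1 k, 4 ^ (l - j)

lemma A_zero (l : ℕ) : A l 0 = 0 := by simp [A]

lemma A_succ (l k : ℕ) : A l (k + 1) = A l k + 4 ^ (l - (k + 1)) := by
  rw [A, A, Finset.sum_Icc_succ_top (by omega : 1 ≤ k + 1)]

lemma A_strictMono (l : ℕ) : StrictMono (A l) := by
  apply strictMono_nat_of_lt_succ
  intro k
  rw [A_succ]
  have : 0 < 4 ^ (l - (k + 1)) := pow_pos (by norm_num) _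
  omega

lemma A_mono (l : ℕ) {k k' : ℕ} (h : k ≤ k') : A l k ≤ A l k' :=
  (A_strictMono l).monotone h

lemma three_A (l : ℕ) : ∀ k, k ≤ l → 3 * A l k + 4 ^ (l - k) = 4 ^ l := by
  intro k
  induction k with
  | zero => simp [A_zero]
  | succ k ih =>
    intro hk
    rw [A_succ]
    have h1 : 3 * A l k + 4 ^ (l - k) = 4 ^ l := ih (by omega)
    have h2 : l - k = (l - (k + 1)) + 1 := by omega
    rw [h2, pow_succ] at h1
    omega

/-- Total number of nodes. -/
def Nn (l : ℕ) : ℕ := A l l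

lemma three_Nn (l : ℕ) : 3 * Nn l + 1 = 4 ^ l := by
  have := three_A l l le_rfl
  simpa [Nn] using this

lemma Nn_eq_A_pred (l : ℕ) (hl : 1 ≤ l) : Nn l = A l (l - 1) + 1 := by
  have h : l - 1 + 1 = l := by omega
  have := A_succ l (l - 1)
  rw [h] at this
  simp [Nn, this]

/-- Start layer of level `k`. -/
def startk (l Lnet k : ℕ) : ℕ := k + Lnet * A l (k - 1)

/-- Materialization layer of node `(k, s)`. -/
def matT (l Lnet k s : ℕ) : ℕ := startk l Lnet k + s * Lnet

lemma startk_mono (l Lnet : ℕ) {k k' : ℕ} (h : k ≤ k') :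
    startk l Lnet k ≤ startk l Lnet k' := by
  unfold startk
  have := A_mono l (show k - 1 ≤ k' - 1 by omega)
  have := Nat.mul_le_mul_left Lnet this
  omega

lemma startk_succ (l Lnet k : ℕ) (hk : 1 ≤ k) :
    startk l Lnet (k + 1) = startk l Lnet k + 4 ^ (l - k) * Lnet + 1 := by
  unfold startk
  have h1 : k + 1 - 1 = (k - 1) + 1 := by omega
  rw [h1, A_succ]
  have h2 : l - (k - 1 + 1) = l - k := by omega
  rw [h2, Nat.mul_add]
  ring

lemma startk_strict (l Lnet : ℕ) (hL : 1 ≤ Lnet) {k k' : ℕ} (hk : 1 ≤ k) (h : k < k') :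
    startk l Lnet k < startk l Lnet k' := by
  have h1 := startk_succ l Lnet k hk
  have h2 := startk_mono l Lnet (show k + 1 ≤ k' by omega)
  omega

/-- Counting indicator sums. -/
lemma sum_indicator (l k : ℕ) (P : ℕ → Prop) [DecidablePred P] (hk : k ≤ l)
    (h : ∀ i, 1 ≤ i → i ≤ l → (P i ↔ i ≤ k)) :
    (∑ i ∈ Finset.Icc 1 l, if P i then 1 else 0) = k := by
  have h1 : ∀ i ∈ Finset.Icc 1 l, (if P i then 1 else 0) = if i ∈ Finset.Icc 1 k then 1 else 0 := by
    intro i hi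
    rw [Finset.mem_Icc] at hi
    by_cases hP : P i
    · rw [if_pos hP, if_pos (Finset.mem_Icc.mpr ⟨hi.1, (h i hi.1 hi.2).1 hP⟩)]
    · rw [if_neg hP, if_neg (fun hm => hP ((h i hi.1 hi.2).2 (Finset.mem_Icc.mp hm).2))]
  rw [Finset.sum_congr rfl h1, Finset.sum_ite_mem]
  have h2 : Finset.Icc 1 l ∩ Finset.Icc 1 k = Finset.Icc 1 k := by
    ext a
    simp only [Finset.mem_inter, Finset.mem_Icc]
    omega
  rw [h2]
  simp

lemma sum_pow_eq (l Lnet i : ℕ) (h1 : 1 ≤ i) (h2 : i ≤ l) :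
    ∑ r ∈ Finset.Icc (l - i + 1) (l - 1), 4 ^ r * Lnet = Lnet * A l (i - 1) := by
  rw [A, Finset.mul_sum]
  refine Finset.sum_nbij' (fun r => l - r) (fun j => l - j) ?_ ?_ ?_ ?_ ?_
  · intro a ha; simp only [Finset.mem_Icc] at *; omega
  · intro a ha; simp only [Finset.mem_Icc] at *; omega
  · intro a ha; simp only [Finset.mem_Icc] at ha; show l - (l - a) = a; omega
  · intro a ha; simp only [Finset.mem_Icc] at ha; show l - (l - a) = a; omega
  · intro a ha; simp only [Finset.mem_Icc] at ha
    have h3 : l - (l - a) = a := by omega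
    rw [h3]; ring

lemma pifun_eq (l Lnet T k : ℕ) (hL : 1 ≤ Lnet) (hk1 : 1 ≤ k) (hkl : k ≤ l)
    (h1 : startk l Lnet k ≤ T) (h2 : T < startk l Lnet (k + 1)) :
    pifun l Lnet T = k := by
  unfold pifun
  refine sum_indicator l k _ hkl ?_
  intro i hi hil
  rw [sum_pow_eq l Lnet i hi hil]
  show startk l Lnet i ≤ T ↔ i ≤ k
  constructor
  · intro h
    by_contra hc
    push_neg at hc
    have := startk_mono l Lnet (show k + 1 ≤ i by omega)
    omega
  · intro h
    exact le_trans (startk_mono l Lnet h) h1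

/-- Decoder of node indices. -/
def kOfN (l n : ℕ) : ℕ := 1 + ∑ j ∈ Finset.Icc 1 l, if A l j < n then 1 else 0

lemma kOfN_eq (l k n : ℕ) (hk1 : 1 ≤ k) (hkl : k ≤ l) (h1 : A l (k - 1) < n)
    (h2 : n ≤ A l k) : kOfN l n = k := by
  unfold kOfN
  rw [sum_indicator l (k - 1) _ (by omega) ?_]
  · omega
  intro i hi hil
  constructor
  · intro h
    by_contra hc
    push_neg at hc
    have := A_mono l (show k ≤ i by omega)
    omega
  · intro h
    have := A_mono l (show i ≤ k - 1 from h)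
    omega

lemma node_decomp (l : ℕ) : ∀ k, k ≤ l → ∀ n, 1 ≤ n → n ≤ A l k →
    ∃ k', 1 ≤ k' ∧ k' ≤ k ∧ A l (k' - 1) < n ∧ n ≤ A l k' := by
  intro k
  induction k with
  | zero => intro _ n h1 h2; rw [A_zero] at h2; omega
  | succ k ih =>
    intro hk n h1 h2
    by_cases hc : n ≤ A l k
    · obtain ⟨k', hk1, hk2, hk3, hk4⟩ := ih (by omega) n h1 hc
      exact ⟨k', hk1, by omega, hk3, hk4⟩
    · exact ⟨k + 1, by omega, le_rfl, by simpa using by omega, h2⟩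

lemma blk_lt (S L s t : ℕ) (hS : 1 ≤ s) (hs : s ≤ S) (ht1 : 1 ≤ t) (ht : t ≤ L) :
    (s - 1) * L + (t - 1) < S * L := by
  have h1 : ((s - 1) + 1) * L ≤ S * L := Nat.mul_le_mul_right _ (by omega)
  have h2 : ((s - 1) + 1) * L = (s - 1) * L + L := by ring
  omega

lemma blk_div (L s t : ℕ) (hL : 0 < L) (ht1 : 1 ≤ t) (ht : t ≤ L) :
    ((s - 1) * L + (t - 1)) / L = s - 1 ∧ ((s - 1) * L + (t - 1)) % L = t - 1 := by
  constructor
  · rw [mul_comm, Nat.mul_add_div hL, Nat.div_eq_of_lt (by omega)]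
    omega
  · rw [mul_comm, Nat.mul_add_mod, Nat.mod_eq_of_lt (by omega)]

end CNN6

/-! ### The CNN construction -/

namespace CNN6

/-- positive channel of node `(k,s)`. -/
def chP (l k s : ℕ) : ℕ := 2 * (A l (k - 1) + s) + 1
/-- negative channel of node `(k,s)`. -/
def chM (l k s : ℕ) : ℕ := 2 * (A l (k - 1) + s) + 2

/-- positive channel holding the `c`-th input of network `(k,s)`. -/
def childP (l k s c : ℕ) : ℕ := if k = 1 then 1 else chP l (k - 1) (4 * (s - 1) + c)
def childM (l k s c : ℕ) : ℕ := if k = 1 then 2 else chM l (k - 1) (4 * (s - 1) + c)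

/-- child index decoded from a filter position. -/
def cIdx (t₁ t₂ : ℕ) : ℕ :=
  if t₁ = 1 then (if t₂ = 1 then 1 else 2) else (if t₂ = 1 then 3 else 4)

/-- The convolution weights. -/
def cwF (l Lnet rnet : ℕ) (v : ℕ → ℕ → ℕ → ℕ → ℕ → ℝ) (T t₁ t₂ s₁ s₂ : ℕ) : ℝ :=
  if s₂ = 1 then (if t₁ = 1 ∧ t₂ = 1 ∧ s₁ = 1 then 1 else 0)
  else if s₂ = 2 then
    (if T = 1 then (if t₁ = 1 ∧ t₂ = 1 ∧ s₁ = 1 then (-1) else 0)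
     else (if t₁ = 1 ∧ t₂ = 1 ∧ s₁ = 2 then 1 else 0))
  else if s₂ ≤ 2 * Nn l + 2 then
    (if T = matT l Lnet (kOfN l ((s₂ - 1) / 2)) ((s₂ - 1) / 2 - A l (kOfN l ((s₂ - 1) / 2) - 1)) then
       (if t₁ = 1 ∧ t₂ = 1 ∧ 2 * Nn l + 3 ≤ s₁ ∧ s₁ ≤ 2 * Nn l + 2 + rnet then
          (if s₂ % 2 = 1 then (1 : ℝ) else -1) *
            v (kOfN l ((s₂ - 1) / 2)) ((s₂ - 1) / 2 - A l (kOfN l ((s₂ - 1) / 2) - 1))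
              Lnet 1 (s₁ - (2 * Nn l + 2))
        else 0)
     else if matT l Lnet (kOfN l ((s₂ - 1) / 2)) ((s₂ - 1) / 2 - A l (kOfN l ((s₂ - 1) / 2) - 1)) < T then
       (if t₁ = 1 ∧ t₂ = 1 ∧ s₁ = s₂ then 1 else 0)
     else 0)
  else if s₂ ≤ 2 * Nn l + 2 + rnet then
    (if 1 ≤ pifun l Lnet T ∧ pifun l Lnet T ≤ l ∧ startk l Lnet (pifun l Lnet T) ≤ T ∧
        T - startk l Lnet (pifun l Lnet T) < 4 ^ (l - pifun l Lnet T) * Lnet then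
       (if (T - startk l Lnet (pifun l Lnet T)) % Lnet = 0 then
          (if (t₁ = 1 ∨ t₁ = 2 ^ (pifun l Lnet T - 1) + 1) ∧
              (t₂ = 1 ∨ t₂ = 2 ^ (pifun l Lnet T - 1) + 1) then
             (if s₁ = childP l (pifun l Lnet T)
                    ((T - startk l Lnet (pifun l Lnet T)) / Lnet + 1) (cIdx t₁ t₂) then
                v (pifun l Lnet T) ((T - startk l Lnet (pifun l Lnet T)) / Lnet + 1) 0
                  (s₂ - (2 * Nn l + 2)) (cIdx t₁ t₂)
              else if s₁ = childM l (pifun l Lnet T)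
                    ((T - startk l Lnet (pifun l Lnet T)) / Lnet + 1) (cIdx t₁ t₂) then
                -(v (pifun l Lnet T) ((T - startk l Lnet (pifun l Lnet T)) / Lnet + 1) 0
                  (s₂ - (2 * Nn l + 2)) (cIdx t₁ t₂))
              else 0)
           else 0)
        else
          (if t₁ = 1 ∧ t₂ = 1 ∧ 2 * Nn l + 3 ≤ s₁ ∧ s₁ ≤ 2 * Nn l + 2 + rnet then
             v (pifun l Lnet T) ((T - startk l Lnet (pifun l Lnet T)) / Lnet + 1)
               ((T - startk l Lnet (pifun l Lnet T)) % Lnet)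
               (s₂ - (2 * Nn l + 2)) (s₁ - (2 * Nn l + 2))
           else 0))
     else 0)
  else 0

/-- The biases. -/
def cbF (l Lnet rnet : ℕ) (v : ℕ → ℕ → ℕ → ℕ → ℕ → ℝ) (T s₂ : ℕ) : ℝ :=
  if s₂ ≤ 2 then 0
  else if s₂ ≤ 2 * Nn l + 2 then
    (if T = matT l Lnet (kOfN l ((s₂ - 1) / 2)) ((s₂ - 1) / 2 - A l (kOfN l ((s₂ - 1) / 2) - 1)) then
       (if s₂ % 2 = 1 then (1 : ℝ) else -1) *
         v (kOfN l ((s₂ - 1) / 2)) ((s₂ - 1) / 2 - A l (kOfN l ((s₂ - 1) / 2) - 1)) Lnet 1 0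
     else 0)
  else if s₂ ≤ 2 * Nn l + 2 + rnet then
    (if 1 ≤ pifun l Lnet T ∧ pifun l Lnet T ≤ l ∧ startk l Lnet (pifun l Lnet T) ≤ T ∧
        T - startk l Lnet (pifun l Lnet T) < 4 ^ (l - pifun l Lnet T) * Lnet then
       v (pifun l Lnet T) ((T - startk l Lnet (pifun l Lnet T)) / Lnet + 1)
         ((T - startk l Lnet (pifun l Lnet T)) % Lnet) (s₂ - (2 * Nn l + 2)) 0
     else 0)
  else 0

/-- The output weights. -/
def coF (l : ℕ) (s : ℕ) : ℝ :=
  if s = 2 * Nn l + 1 then 1 else if s = 2 * Nn l + 2 then -1 else 0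

/-- The CNN. -/
def p0 (l Lnet rnet : ℕ) (v : ℕ → ℕ → ℕ → ℕ → ℕ → ℝ) : CNNParams :=
  ⟨cwF l Lnet rnet v, cbF l Lnet rnet v, coF l⟩

def kcF (l rnet : ℕ) (r : ℕ) : ℕ := if r = 0 then 1 else 2 * Nn l + 2 + rnet

def MF (l Lnet : ℕ) (s : ℕ) : ℕ := 2 ^ pifun l Lnet s

end CNN6

namespace CNN6

/-! ### Generic evaluation of feature maps -/

lemma featMap_eval (d₁ d₂ : ℕ) (kc M : ℕ → ℕ) (p : CNNParams) (x : ℕ → ℕ → ℝ)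
    (r i j s₂ : ℕ) (O : Finset (ℕ × ℕ))
    (hzero : ∀ t₁ t₂ s₁, (t₁, t₂) ∉ O → p.cw (r + 1) t₁ t₂ s₁ s₂ = 0)
    (hO : ∀ ab ∈ O, 1 ≤ ab.1 ∧ ab.1 ≤ M (r + 1) ∧ 1 ≤ ab.2 ∧ ab.2 ≤ M (r + 1) ∧
      i + ab.1 - 1 ≤ d₁ ∧ j + ab.2 - 1 ≤ d₂) :
    featMap d₁ d₂ kc M p x (r + 1) i j s₂ =
      max 0 (p.cb (r + 1) s₂ + ∑ ab ∈ O, ∑ s₁ ∈ Finset.Icc 1 (kc r),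
        p.cw (r + 1) ab.1 ab.2 s₁ s₂ *
          featMap d₁ d₂ kc M p x r (i + ab.1 - 1) (j + ab.2 - 1) s₁) := by
  have hsub : O ⊆ Finset.Icc 1 (M (r + 1)) ×ˢ Finset.Icc 1 (M (r + 1)) := by
    intro ab hab
    obtain ⟨h1, h2, h3, h4, _, _⟩ := hO ab hab
    simp only [Finset.mem_product, Finset.mem_Icc]
    exact ⟨⟨h1, h2⟩, h3, h4⟩
  have key : ∀ s₁, (∑ t₁ ∈ Finset.Icc 1 (M (r + 1)), ∑ t₂ ∈ Finset.Icc 1 (M (r + 1)),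
      if i + t₁ - 1 ≤ d₁ ∧ j + t₂ - 1 ≤ d₂ then
        p.cw (r + 1) t₁ t₂ s₁ s₂ * featMap d₁ d₂ kc M p x r (i + t₁ - 1) (j + t₂ - 1) s₁
      else 0)
      = ∑ ab ∈ O, p.cw (r + 1) ab.1 ab.2 s₁ s₂ *
          featMap d₁ d₂ kc M p x r (i + ab.1 - 1) (j + ab.2 - 1) s₁ := by
    intro s₁
    rw [← Finset.sum_product']
    rw [← Finset.sum_subset hsub ?van]
    · refine Finset.sum_congr rfl ?_
      intro ab hab
      obtain ⟨_, _, _, _, h5, h6⟩ := hO ab hab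
      rw [if_pos ⟨h5, h6⟩]
    · intro ab _ hab
      rw [hzero ab.1 ab.2 s₁ (by simpa using hab)]
      simp
  show max 0 _ = _
  rw [Finset.sum_congr rfl (fun s₁ _ => key s₁), Finset.sum_comm]

lemma sum_single_coeff (K c : ℕ) (hc1 : 1 ≤ c) (hc2 : c ≤ K) (a : ℝ) (f w : ℕ → ℝ)
    (hw : ∀ s₁ ∈ Finset.Icc 1 K, w s₁ = if s₁ = c then a else 0) :
    ∑ s₁ ∈ Finset.Icc 1 K, w s₁ * f s₁ = a * f c := by
  rw [Finset.sum_eq_single_of_mem c (Finset.mem_Icc.mpr ⟨hc1, hc2⟩)]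
  · rw [hw c (Finset.mem_Icc.mpr ⟨hc1, hc2⟩), if_pos rfl]
  · intro b hb hbc
    rw [hw b hb, if_neg hbc, zero_mul]

lemma sum_pair_coeff (K c c' : ℕ) (hne : c ≠ c') (hc1 : 1 ≤ c) (hc2 : c ≤ K)
    (hc1' : 1 ≤ c') (hc2' : c' ≤ K) (a b : ℝ) (f w : ℕ → ℝ)
    (hw : ∀ s₁ ∈ Finset.Icc 1 K, w s₁ = if s₁ = c then a else if s₁ = c' then b else 0) :
    ∑ s₁ ∈ Finset.Icc 1 K, w s₁ * f s₁ = a * f c + b * f c' := by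
  have h : ∀ s₁ ∈ Finset.Icc 1 K, w s₁ * f s₁
      = (if s₁ = c then a * f c else 0) + (if s₁ = c' then b * f c' else 0) := by
    intro s₁ hs₁
    rw [hw s₁ hs₁]
    by_cases h1 : s₁ = c
    · subst h1; rw [if_pos rfl, if_pos rfl, if_neg hne, add_zero]
    · rw [if_neg h1, if_neg h1, zero_add]
      by_cases h2 : s₁ = c'
      · subst h2; rw [if_pos rfl, if_pos rfl]
      · rw [if_neg h2, if_neg h2, zero_mul]
  rw [Finset.sum_congr rfl h, Finset.sum_add_distrib,
    Finset.sum_ite_eq' _ c, Finset.sum_ite_eq' _ c',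
    if_pos (Finset.mem_Icc.mpr ⟨hc1, hc2⟩), if_pos (Finset.mem_Icc.mpr ⟨hc1', hc2'⟩)]

lemma sum_scratch_reindex (a b : ℕ) (g : ℕ → ℝ) (f w : ℕ → ℝ)
    (hw : ∀ s₁ ∈ Finset.Icc 1 (a + b),
      w s₁ = if a + 1 ≤ s₁ ∧ s₁ ≤ a + b then g (s₁ - a) else 0) :
    ∑ s₁ ∈ Finset.Icc 1 (a + b), w s₁ * f s₁ = ∑ m ∈ Finset.Icc 1 b, g m * f (a + m) := by
  rw [Finset.sum_congr rfl (fun s₁ hs₁ => by rw [hw s₁ hs₁])]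
  rw [← Finset.sum_subset (Finset.Icc_subset_Icc (by omega) le_rfl :
      Finset.Icc (a + 1) (a + b) ⊆ Finset.Icc 1 (a + b)) ?van]
  · refine Finset.sum_nbij' (fun s₁ => s₁ - a) (fun m => a + m) ?_ ?_ ?_ ?_ ?_
    · intro z hz; simp only [Finset.mem_Icc] at *; omega
    · intro z hz; simp only [Finset.mem_Icc] at *; omega
    · intro z hz; simp only [Finset.mem_Icc] at hz; show a + (z - a) = z; omega
    · intro z hz; simp only [Finset.mem_Icc] at hz; show a + z - a = z; omega
    · intro z hz; simp only [Finset.mem_Icc] at hz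
      rw [if_pos (by omega), show a + (z - a) = z by omega]
  · intro z hz hz2
    simp only [Finset.mem_Icc] at hz hz2
    rw [if_neg (by omega), zero_mul]

lemma sum_Icc4 (f : ℕ → ℝ) : ∑ c ∈ Finset.Icc 1 4, f c = f 1 + f 2 + f 3 + f 4 := by
  rw [show (Finset.Icc 1 4 : Finset ℕ) = {1, 2, 3, 4} by decide]
  rw [Finset.sum_insert (by decide), Finset.sum_insert (by decide),
    Finset.sum_insert (by decide), Finset.sum_singleton]
  ring

lemma max00 (a : ℝ) : max 0 (max 0 a) = max 0 a := by
  rcases le_total a 0 with h | h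
  · rw [max_eq_left h, max_eq_left le_rfl]
  · rw [max_eq_right h, max_eq_right h]

lemma maxsub (a : ℝ) : max 0 a - max 0 (-a) = a := by
  rcases le_total a 0 with h | h
  · rw [max_eq_left h, max_eq_right (by linarith)]
    ring
  · rw [max_eq_right h, max_eq_left (by linarith)]
    ring

end CNN6

namespace CNN6

/-! ### Decoding the weights -/

lemma kcF_pos (l rnet T : ℕ) : 1 ≤ kcF l rnet T := by
  unfold kcF; split <;> omega

lemma kcF_eval (l rnet T : ℕ) (hT : 1 ≤ T) : kcF l rnet T = 2 * Nn l + 2 + rnet := by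
  unfold kcF; rw [if_neg (by omega)]

lemma nid_le (l k s : ℕ) (hk1 : 1 ≤ k) (hkl : k ≤ l) (hs : s ≤ 4 ^ (l - k)) :
    A l (k - 1) + s ≤ Nn l := by
  have h1 := A_succ l (k - 1)
  have h2 : (k - 1) + 1 = k := by omega
  rw [h2] at h1
  have h4 := A_mono l hkl
  unfold Nn at *
  omega

lemma kOfN_nid (l k s : ℕ) (hk1 : 1 ≤ k) (hkl : k ≤ l) (hs1 : 1 ≤ s) (hs : s ≤ 4 ^ (l - k)) :
    kOfN l (A l (k - 1) + s) = k := by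
  apply kOfN_eq l k _ hk1 hkl (by omega)
  have h1 := A_succ l (k - 1)
  have h2 : (k - 1) + 1 = k := by omega
  rw [h2] at h1
  omega

lemma cw_ch1 (l Lnet rnet : ℕ) (v : ℕ → ℕ → ℕ → ℕ → ℕ → ℝ) (T t₁ t₂ s₁ : ℕ) :
    cwF l Lnet rnet v T t₁ t₂ s₁ 1 = if t₁ = 1 ∧ t₂ = 1 ∧ s₁ = 1 then 1 else 0 := rfl

lemma cw_ch2 (l Lnet rnet : ℕ) (v : ℕ → ℕ → ℕ → ℕ → ℕ → ℝ) (T t₁ t₂ s₁ : ℕ) :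
    cwF l Lnet rnet v T t₁ t₂ s₁ 2 =
      if T = 1 then (if t₁ = 1 ∧ t₂ = 1 ∧ s₁ = 1 then (-1) else 0)
      else (if t₁ = 1 ∧ t₂ = 1 ∧ s₁ = 2 then 1 else 0) := by
  unfold cwF
  norm_num

lemma cb_le2 (l Lnet rnet : ℕ) (v : ℕ → ℕ → ℕ → ℕ → ℕ → ℝ) (T s₂ : ℕ) (h : s₂ ≤ 2) :
    cbF l Lnet rnet v T s₂ = 0 := by
  unfold cbF; rw [if_pos h]

lemma cw_chP_eq (l Lnet rnet : ℕ) (v : ℕ → ℕ → ℕ → ℕ → ℕ → ℝ) (k s : ℕ)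
    (hk1 : 1 ≤ k) (hkl : k ≤ l) (hs1 : 1 ≤ s) (hs : s ≤ 4 ^ (l - k)) (T t₁ t₂ s₁ : ℕ) :
    cwF l Lnet rnet v T t₁ t₂ s₁ (chP l k s) =
      if T = matT l Lnet k s then
        (if t₁ = 1 ∧ t₂ = 1 ∧ 2 * Nn l + 3 ≤ s₁ ∧ s₁ ≤ 2 * Nn l + 2 + rnet then
           v k s Lnet 1 (s₁ - (2 * Nn l + 2)) else 0)
      else if matT l Lnet k s < T then
        (if t₁ = 1 ∧ t₂ = 1 ∧ s₁ = chP l k s then 1 else 0)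
      else 0 := by
  have hle := nid_le l k s hk1 hkl hs
  have hd : (chP l k s - 1) / 2 = A l (k - 1) + s := by unfold chP; omega
  unfold cwF
  rw [if_neg (by unfold chP; omega), if_neg (by unfold chP; omega),
    if_pos (show chP l k s ≤ 2 * Nn l + 2 by unfold chP; omega), hd,
    kOfN_nid l k s hk1 hkl hs1 hs]
  have h5 : A l (k - 1) + s - A l (k - 1) = s := by omega
  rw [h5, if_pos (show chP l k s % 2 = 1 by unfold chP; omega)]
  simp only [one_mul]

lemma cw_chM_eq (l Lnet rnet : ℕ) (v : ℕ → ℕ → ℕ → ℕ → ℕ → ℝ) (k s : ℕ)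
    (hk1 : 1 ≤ k) (hkl : k ≤ l) (hs1 : 1 ≤ s) (hs : s ≤ 4 ^ (l - k)) (T t₁ t₂ s₁ : ℕ) :
    cwF l Lnet rnet v T t₁ t₂ s₁ (chM l k s) =
      if T = matT l Lnet k s then
        (if t₁ = 1 ∧ t₂ = 1 ∧ 2 * Nn l + 3 ≤ s₁ ∧ s₁ ≤ 2 * Nn l + 2 + rnet then
           -(v k s Lnet 1 (s₁ - (2 * Nn l + 2))) else 0)
      else if matT l Lnet k s < T then
        (if t₁ = 1 ∧ t₂ = 1 ∧ s₁ = chM l k s then 1 else 0)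
      else 0 := by
  have hle := nid_le l k s hk1 hkl hs
  have hd : (chM l k s - 1) / 2 = A l (k - 1) + s := by unfold chM; omega
  unfold cwF
  rw [if_neg (by unfold chM; omega), if_neg (by unfold chM; omega),
    if_pos (show chM l k s ≤ 2 * Nn l + 2 by unfold chM; omega), hd,
    kOfN_nid l k s hk1 hkl hs1 hs]
  have h5 : A l (k - 1) + s - A l (k - 1) = s := by omega
  rw [h5, if_neg (show ¬(chM l k s % 2 = 1) by unfold chM; omega)]
  simp only [neg_one_mul]

lemma cb_chP_eq (l Lnet rnet : ℕ) (v : ℕ → ℕ → ℕ → ℕ → ℕ → ℝ) (k s : ℕ)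
    (hk1 : 1 ≤ k) (hkl : k ≤ l) (hs1 : 1 ≤ s) (hs : s ≤ 4 ^ (l - k)) (T : ℕ) :
    cbF l Lnet rnet v T (chP l k s) =
      if T = matT l Lnet k s then v k s Lnet 1 0 else 0 := by
  have hle := nid_le l k s hk1 hkl hs
  have hd : (chP l k s - 1) / 2 = A l (k - 1) + s := by unfold chP; omega
  unfold cbF
  rw [if_neg (by unfold chP; omega),
    if_pos (show chP l k s ≤ 2 * Nn l + 2 by unfold chP; omega), hd,
    kOfN_nid l k s hk1 hkl hs1 hs]
  have h5 : A l (k - 1) + s - A l (k - 1) = s := by omega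
  rw [h5, if_pos (show chP l k s % 2 = 1 by unfold chP; omega)]
  simp only [one_mul]

lemma cb_chM_eq (l Lnet rnet : ℕ) (v : ℕ → ℕ → ℕ → ℕ → ℕ → ℝ) (k s : ℕ)
    (hk1 : 1 ≤ k) (hkl : k ≤ l) (hs1 : 1 ≤ s) (hs : s ≤ 4 ^ (l - k)) (T : ℕ) :
    cbF l Lnet rnet v T (chM l k s) =
      if T = matT l Lnet k s then -(v k s Lnet 1 0) else 0 := by
  have hle := nid_le l k s hk1 hkl hs
  have hd : (chM l k s - 1) / 2 = A l (k - 1) + s := by unfold chM; omega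
  unfold cbF
  rw [if_neg (by unfold chM; omega),
    if_pos (show chM l k s ≤ 2 * Nn l + 2 by unfold chM; omega), hd,
    kOfN_nid l k s hk1 hkl hs1 hs]
  have h5 : A l (k - 1) + s - A l (k - 1) = s := by omega
  rw [h5, if_neg (show ¬(chM l k s % 2 = 1) by unfold chM; omega)]
  simp only [neg_one_mul]

lemma A_one_le (l k : ℕ) (hk : 1 ≤ k) : 1 ≤ A l k := by
  have h := A_strictMono l (show 0 < k from hk)
  rw [A_zero] at h
  omega

/-- The start layer of a block characterizes `k = 1, s = 1`. -/
lemma blk_start_one (l Lnet k s : ℕ) (hL : 1 ≤ Lnet) (hk1 : 1 ≤ k) (hs1 : 1 ≤ s)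
    (h : startk l Lnet k + (s - 1) * Lnet = 1) : k = 1 ∧ s = 1 := by
  unfold startk at h
  have hk : k = 1 := by
    by_contra hc
    have h2 : 1 ≤ A l (k - 1) := A_one_le l (k - 1) (by omega)
    have h3 : 1 * 1 ≤ Lnet * A l (k - 1) := Nat.mul_le_mul hL h2
    omega
  subst hk
  simp only [A_zero, Nat.mul_zero, Nat.sub_self] at h
  constructor
  · rfl
  · by_contra hc
    have h2 : 1 * 1 ≤ (s - 1) * Lnet := Nat.mul_le_mul (by omega) hL
    omega

lemma cw_scr1_eq (l Lnet rnet : ℕ) (v : ℕ → ℕ → ℕ → ℕ → ℕ → ℝ) (hL : 1 ≤ Lnet)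
    (k s m : ℕ) (hk1 : 1 ≤ k) (hkl : k ≤ l) (hs1 : 1 ≤ s) (hs : s ≤ 4 ^ (l - k))
    (hm1 : 1 ≤ m) (hm : m ≤ rnet) (T : ℕ) (hT : T = startk l Lnet k + (s - 1) * Lnet)
    (t₁ t₂ s₁ : ℕ) :
    cwF l Lnet rnet v T t₁ t₂ s₁ (2 * Nn l + 2 + m) =
      if (t₁ = 1 ∨ t₁ = 2 ^ (k - 1) + 1) ∧ (t₂ = 1 ∨ t₂ = 2 ^ (k - 1) + 1) then
        (if s₁ = childP l k s (cIdx t₁ t₂) then v k s 0 m (cIdx t₁ t₂)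
         else if s₁ = childM l k s (cIdx t₁ t₂) then -(v k s 0 m (cIdx t₁ t₂)) else 0)
      else 0 := by
  have hp : pifun l Lnet T = k := by
    apply pifun_eq l Lnet T k hL hk1 hkl (by omega)
    rw [startk_succ l Lnet k hk1]
    have := blk_lt (4 ^ (l - k)) Lnet s 1 hs1 hs le_rfl hL
    omega
  have ho : T - startk l Lnet k = (s - 1) * Lnet := by omega
  have hmod : (s - 1) * Lnet % Lnet = 0 := Nat.mul_mod_left _ _
  have hdiv : (s - 1) * Lnet / Lnet = s - 1 := Nat.mul_div_cancel _ (by omega)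
  have hss : s - 1 + 1 = s := by omega
  unfold cwF
  rw [if_neg (by omega), if_neg (by omega), if_neg (by omega), if_pos (by omega), hp, ho,
    if_pos ⟨hk1, hkl, by omega, by
      have := blk_lt (4 ^ (l - k)) Lnet s 1 hs1 hs le_rfl hL
      omega⟩,
    if_pos hmod, hdiv, hss,
    show 2 * Nn l + 2 + m - (2 * Nn l + 2) = m by omega]

lemma cw_scr2_eq (l Lnet rnet : ℕ) (v : ℕ → ℕ → ℕ → ℕ → ℕ → ℝ) (hL : 1 ≤ Lnet)
    (k s t m : ℕ) (hk1 : 1 ≤ k) (hkl : k ≤ l) (hs1 : 1 ≤ s) (hs : s ≤ 4 ^ (l - k))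
    (ht2 : 2 ≤ t) (ht : t ≤ Lnet) (hm1 : 1 ≤ m) (hm : m ≤ rnet) (T : ℕ)
    (hT : T = startk l Lnet k + (s - 1) * Lnet + (t - 1)) (t₁ t₂ s₁ : ℕ) :
    cwF l Lnet rnet v T t₁ t₂ s₁ (2 * Nn l + 2 + m) =
      if t₁ = 1 ∧ t₂ = 1 ∧ 2 * Nn l + 3 ≤ s₁ ∧ s₁ ≤ 2 * Nn l + 2 + rnet then
        v k s (t - 1) m (s₁ - (2 * Nn l + 2))
      else 0 := by
  obtain ⟨hdiv, hmod⟩ := blk_div Lnet s t (by omega) (by omega) ht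
  have hp : pifun l Lnet T = k := by
    apply pifun_eq l Lnet T k hL hk1 hkl (by omega)
    rw [startk_succ l Lnet k hk1]
    have := blk_lt (4 ^ (l - k)) Lnet s t hs1 hs (by omega) ht
    omega
  have ho : T - startk l Lnet k = (s - 1) * Lnet + (t - 1) := by omega
  have hss : s - 1 + 1 = s := by omega
  unfold cwF
  rw [if_neg (by omega), if_neg (by omega), if_neg (by omega), if_pos (by omega), hp, ho,
    if_pos ⟨hk1, hkl, by omega, blk_lt (4 ^ (l - k)) Lnet s t hs1 hs (by omega) ht⟩,
    if_neg (by omega : ¬((s - 1) * Lnet + (t - 1)) % Lnet = 0), hmod, hdiv, hss,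
    show 2 * Nn l + 2 + m - (2 * Nn l + 2) = m by omega]

lemma cb_scr_eq (l Lnet rnet : ℕ) (v : ℕ → ℕ → ℕ → ℕ → ℕ → ℝ) (hL : 1 ≤ Lnet)
    (k s t m : ℕ) (hk1 : 1 ≤ k) (hkl : k ≤ l) (hs1 : 1 ≤ s) (hs : s ≤ 4 ^ (l - k))
    (ht1 : 1 ≤ t) (ht : t ≤ Lnet) (hm1 : 1 ≤ m) (hm : m ≤ rnet) (T : ℕ)
    (hT : T = startk l Lnet k + (s - 1) * Lnet + (t - 1)) :
    cbF l Lnet rnet v T (2 * Nn l + 2 + m) = v k s (t - 1) m 0 := by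
  obtain ⟨hdiv, hmod⟩ := blk_div Lnet s t (by omega) ht1 ht
  have hp : pifun l Lnet T = k := by
    apply pifun_eq l Lnet T k hL hk1 hkl (by omega)
    rw [startk_succ l Lnet k hk1]
    have := blk_lt (4 ^ (l - k)) Lnet s t hs1 hs ht1 ht
    omega
  have ho : T - startk l Lnet k = (s - 1) * Lnet + (t - 1) := by omega
  have hss : s - 1 + 1 = s := by omega
  unfold cbF
  rw [if_neg (by omega), if_neg (by omega), if_pos (by omega), hp, ho,
    if_pos ⟨hk1, hkl, by omega, blk_lt (4 ^ (l - k)) Lnet s t hs1 hs ht1 ht⟩,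
    hmod, hdiv, hss,
    show 2 * Nn l + 2 + m - (2 * Nn l + 2) = m by omega]

end CNN6

namespace CNN6

section FMlem

variable (l Lnet rnet : ℕ) (v : ℕ → ℕ → ℕ → ℕ → ℕ → ℝ) (d₁ d₂ : ℕ) (x : ℕ → ℕ → ℝ)

/-- Feature maps of the constructed CNN. -/
def FM (T i j s : ℕ) : ℝ :=
  featMap d₁ d₂ (kcF l rnet) (MF l Lnet) (p0 l Lnet rnet v) x T i j s

lemma FM_zero (i j s : ℕ) : FM l Lnet rnet v d₁ d₂ x 0 i j s = if s = 1 then x i j else 0 := rfl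

lemma MF_one_le (T : ℕ) : 1 ≤ MF l Lnet T :=
  Nat.one_le_two_pow

lemma F_eval11 (T i j s₂ : ℕ) (hi : 1 ≤ i) (hid : i ≤ d₁) (hj : 1 ≤ j) (hjd : j ≤ d₂)
    (hzero : ∀ t₁ t₂ s₁, ¬(t₁ = 1 ∧ t₂ = 1) → cwF l Lnet rnet v (T + 1) t₁ t₂ s₁ s₂ = 0) :
    FM l Lnet rnet v d₁ d₂ x (T + 1) i j s₂ =
      max 0 (cbF l Lnet rnet v (T + 1) s₂ + ∑ s₁ ∈ Finset.Icc 1 (kcF l rnet T),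
        cwF l Lnet rnet v (T + 1) 1 1 s₁ s₂ * FM l Lnet rnet v d₁ d₂ x T i j s₁) := by
  have h := featMap_eval d₁ d₂ (kcF l rnet) (MF l Lnet) (p0 l Lnet rnet v) x T i j s₂ {(1, 1)}
    (by
      intro t₁ t₂ s₁ hmem
      exact hzero t₁ t₂ s₁ (by simpa [Prod.ext_iff] using hmem))
    (by
      intro ab hab
      simp only [Finset.mem_singleton] at hab
      subst hab
      have h2 := MF_one_le l Lnet (T + 1)
      exact ⟨le_rfl, by omega, le_rfl, by omega, by omega, by omega⟩)
  simp only [FM]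
  rw [h, Finset.sum_singleton]
  simp only [p0]
  norm_num

lemma F_eval4off (T i j s₂ D : ℕ) (hD : 2 ≤ D) (hM : D ≤ MF l Lnet (T + 1))
    (hi : 1 ≤ i) (hj : 1 ≤ j) (hid : i + D - 1 ≤ d₁) (hjd : j + D - 1 ≤ d₂)
    (hzero : ∀ t₁ t₂ s₁, ¬((t₁ = 1 ∨ t₁ = D) ∧ (t₂ = 1 ∨ t₂ = D)) →
      cwF l Lnet rnet v (T + 1) t₁ t₂ s₁ s₂ = 0) :
    FM l Lnet rnet v d₁ d₂ x (T + 1) i j s₂ =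
      max 0 (cbF l Lnet rnet v (T + 1) s₂ +
        (∑ s₁ ∈ Finset.Icc 1 (kcF l rnet T),
            cwF l Lnet rnet v (T + 1) 1 1 s₁ s₂ * FM l Lnet rnet v d₁ d₂ x T i j s₁ +
         (∑ s₁ ∈ Finset.Icc 1 (kcF l rnet T),
            cwF l Lnet rnet v (T + 1) 1 D s₁ s₂ *
              FM l Lnet rnet v d₁ d₂ x T i (j + D - 1) s₁ +
          (∑ s₁ ∈ Finset.Icc 1 (kcF l rnet T),
             cwF l Lnet rnet v (T + 1) D 1 s₁ s₂ *
               FM l Lnet rnet v d₁ d₂ x T (i + D - 1) j s₁ +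
           ∑ s₁ ∈ Finset.Icc 1 (kcF l rnet T),
             cwF l Lnet rnet v (T + 1) D D s₁ s₂ *
               FM l Lnet rnet v d₁ d₂ x T (i + D - 1) (j + D - 1) s₁)))) := by
  have hne1 : ((1, 1) : ℕ × ℕ) ∉ ({(1, D), (D, 1), (D, D)} : Finset (ℕ × ℕ)) := by
    simp only [Finset.mem_insert, Finset.mem_singleton, Prod.ext_iff]
    omega
  have hne2 : ((1, D) : ℕ × ℕ) ∉ ({(D, 1), (D, D)} : Finset (ℕ × ℕ)) := by
    simp only [Finset.mem_insert, Finset.mem_singleton, Prod.ext_iff]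
    omega
  have hne3 : ((D, 1) : ℕ × ℕ) ∉ ({(D, D)} : Finset (ℕ × ℕ)) := by
    simp only [Finset.mem_singleton, Prod.ext_iff]
    omega
  have h := featMap_eval d₁ d₂ (kcF l rnet) (MF l Lnet) (p0 l Lnet rnet v) x T i j s₂
    {(1, 1), (1, D), (D, 1), (D, D)}
    (by
      intro t₁ t₂ s₁ hmem
      apply hzero
      intro hc
      apply hmem
      simp only [Finset.mem_insert, Finset.mem_singleton, Prod.ext_iff]
      tauto)
    (by
      intro ab hab
      simp only [Finset.mem_insert, Finset.mem_singleton] at hab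
      rcases hab with h | h | h | h <;> subst h <;>
        refine ⟨?_, ?_, ?_, ?_, ?_, ?_⟩ <;> simp <;> omega)
  simp only [FM]
  rw [h, Finset.sum_insert hne1, Finset.sum_insert hne2, Finset.sum_insert hne3,
    Finset.sum_singleton]
  simp only [p0]
  norm_num

lemma F_inp (T i j : ℕ) (hi1 : 1 ≤ i) (hid : i ≤ d₁) (hj1 : 1 ≤ j) (hjd : j ≤ d₂)
    (hT : 1 ≤ T) :
    FM l Lnet rnet v d₁ d₂ x T i j 1 = max 0 (x i j) ∧
    FM l Lnet rnet v d₁ d₂ x T i j 2 = max 0 (-(x i j)) := by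
  induction T with
  | zero => omega
  | succ T ih =>
    have e1 := F_eval11 l Lnet rnet v d₁ d₂ x T i j 1 hi1 hid hj1 hjd
      (by intro t₁ t₂ s₁ h; rw [cw_ch1]; exact if_neg (by tauto))
    rw [cb_le2 l Lnet rnet v (T + 1) 1 (by omega)] at e1
    have hsum1 : ∑ s₁ ∈ Finset.Icc 1 (kcF l rnet T),
        cwF l Lnet rnet v (T + 1) 1 1 s₁ 1 * FM l Lnet rnet v d₁ d₂ x T i j s₁
        = 1 * FM l Lnet rnet v d₁ d₂ x T i j 1 :=
      sum_single_coeff _ 1 le_rfl (kcF_pos l rnet T) 1 _ _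
        (by intro s₁ _; rw [cw_ch1]; simp)
    rw [hsum1, one_mul, zero_add] at e1
    have e2 := F_eval11 l Lnet rnet v d₁ d₂ x T i j 2 hi1 hid hj1 hjd
      (by intro t₁ t₂ s₁ h; rw [cw_ch2]; split_ifs <;> first | rfl | tauto)
    rw [cb_le2 l Lnet rnet v (T + 1) 2 (by omega)] at e2
    rcases Nat.eq_zero_or_pos T with hT0 | hT0
    · subst hT0
      have hsum2 : ∑ s₁ ∈ Finset.Icc 1 (kcF l rnet 0),
          cwF l Lnet rnet v 1 1 1 s₁ 2 * FM l Lnet rnet v d₁ d₂ x 0 i j s₁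
          = (-1) * FM l Lnet rnet v d₁ d₂ x 0 i j 1 :=
        sum_single_coeff _ 1 le_rfl (kcF_pos l rnet 0) (-1) _ _
          (by intro s₁ _; rw [cw_ch2, if_pos rfl]; simp)
      rw [hsum2] at e2
      have h0 : FM l Lnet rnet v d₁ d₂ x 0 i j 1 = x i j := rfl
      rw [h0] at e1 e2
      refine ⟨e1, ?_⟩
      rw [e2]
      norm_num
    · obtain ⟨ihA, ihB⟩ := ih hT0
      have hsum2 : ∑ s₁ ∈ Finset.Icc 1 (kcF l rnet T),
          cwF l Lnet rnet v (T + 1) 1 1 s₁ 2 * FM l Lnet rnet v d₁ d₂ x T i j s₁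
          = 1 * FM l Lnet rnet v d₁ d₂ x T i j 2 :=
        sum_single_coeff _ 2 (by omega)
          (by rw [kcF_eval l rnet T hT0]; omega) 1 _ _
          (by intro s₁ _; rw [cw_ch2, if_neg (by omega)]; simp)
      rw [hsum2, one_mul, zero_add] at e2
      rw [ihA] at e1
      rw [ihB] at e2
      exact ⟨by rw [e1, max00], by rw [e2, max00]⟩

lemma matT_ge2 (k s : ℕ) (hL : 1 ≤ Lnet) (hk1 : 1 ≤ k) (hs1 : 1 ≤ s) :
    2 ≤ matT l Lnet k s := by
  unfold matT startk
  have := Nat.mul_le_mul hs1 hL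
  omega

lemma F_copyP (hL : 1 ≤ Lnet) (k s : ℕ) (hk1 : 1 ≤ k) (hkl : k ≤ l) (hs1 : 1 ≤ s)
    (hs : s ≤ 4 ^ (l - k)) (T i j : ℕ) (hmat : matT l Lnet k s ≤ T)
    (hi1 : 1 ≤ i) (hid : i ≤ d₁) (hj1 : 1 ≤ j) (hjd : j ≤ d₂) :
    FM l Lnet rnet v d₁ d₂ x (T + 1) i j (chP l k s) =
      max 0 (FM l Lnet rnet v d₁ d₂ x T i j (chP l k s)) := by
  have hT1 : 1 ≤ T := by have := matT_ge2 l Lnet k s hL hk1 hs1; omega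
  have e := F_eval11 l Lnet rnet v d₁ d₂ x T i j (chP l k s) hi1 hid hj1 hjd
    (by
      intro t₁ t₂ s₁ h
      rw [cw_chP_eq l Lnet rnet v k s hk1 hkl hs1 hs]
      split_ifs <;> first | rfl | tauto)
  rw [cb_chP_eq l Lnet rnet v k s hk1 hkl hs1 hs (T + 1), if_neg (by omega)] at e
  have hchle : chP l k s ≤ 2 * Nn l + 2 + rnet := by
    have := nid_le l k s hk1 hkl hs
    unfold chP
    omega
  have hsum : ∑ s₁ ∈ Finset.Icc 1 (kcF l rnet T),
      cwF l Lnet rnet v (T + 1) 1 1 s₁ (chP l k s) * FM l Lnet rnet v d₁ d₂ x T i j s₁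
      = 1 * FM l Lnet rnet v d₁ d₂ x T i j (chP l k s) :=
    sum_single_coeff _ (chP l k s) (by unfold chP; omega)
      (by rw [kcF_eval l rnet T hT1]; exact hchle) 1 _ _
      (by
        intro s₁ _
        rw [cw_chP_eq l Lnet rnet v k s hk1 hkl hs1 hs, if_neg (by omega), if_pos (by omega)]
        simp)
  rw [hsum, one_mul, zero_add] at e
  exact e

lemma F_copyM (hL : 1 ≤ Lnet) (k s : ℕ) (hk1 : 1 ≤ k) (hkl : k ≤ l) (hs1 : 1 ≤ s)
    (hs : s ≤ 4 ^ (l - k)) (T i j : ℕ) (hmat : matT l Lnet k s ≤ T)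
    (hi1 : 1 ≤ i) (hid : i ≤ d₁) (hj1 : 1 ≤ j) (hjd : j ≤ d₂) :
    FM l Lnet rnet v d₁ d₂ x (T + 1) i j (chM l k s) =
      max 0 (FM l Lnet rnet v d₁ d₂ x T i j (chM l k s)) := by
  have hT1 : 1 ≤ T := by have := matT_ge2 l Lnet k s hL hk1 hs1; omega
  have e := F_eval11 l Lnet rnet v d₁ d₂ x T i j (chM l k s) hi1 hid hj1 hjd
    (by
      intro t₁ t₂ s₁ h
      rw [cw_chM_eq l Lnet rnet v k s hk1 hkl hs1 hs]
      split_ifs <;> first | rfl | tauto)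
  rw [cb_chM_eq l Lnet rnet v k s hk1 hkl hs1 hs (T + 1), if_neg (by omega)] at e
  have hchle : chM l k s ≤ 2 * Nn l + 2 + rnet := by
    have := nid_le l k s hk1 hkl hs
    unfold chM
    omega
  have hsum : ∑ s₁ ∈ Finset.Icc 1 (kcF l rnet T),
      cwF l Lnet rnet v (T + 1) 1 1 s₁ (chM l k s) * FM l Lnet rnet v d₁ d₂ x T i j s₁
      = 1 * FM l Lnet rnet v d₁ d₂ x T i j (chM l k s) :=
    sum_single_coeff _ (chM l k s) (by unfold chM; omega)
      (by rw [kcF_eval l rnet T hT1]; exact hchle) 1 _ _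
      (by
        intro s₁ _
        rw [cw_chM_eq l Lnet rnet v k s hk1 hkl hs1 hs, if_neg (by omega), if_pos (by omega)]
        simp)
  rw [hsum, one_mul, zero_add] at e
  exact e

lemma F_writeP (hL : 1 ≤ Lnet) (k s : ℕ) (hk1 : 1 ≤ k) (hkl : k ≤ l) (hs1 : 1 ≤ s)
    (hs : s ≤ 4 ^ (l - k)) (T i j : ℕ) (hmat : T + 1 = matT l Lnet k s)
    (hi1 : 1 ≤ i) (hid : i ≤ d₁) (hj1 : 1 ≤ j) (hjd : j ≤ d₂) :
    FM l Lnet rnet v d₁ d₂ x (T + 1) i j (chP l k s) =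
      max 0 (v k s Lnet 1 0 + ∑ m ∈ Finset.Icc 1 rnet,
        v k s Lnet 1 m * FM l Lnet rnet v d₁ d₂ x T i j (2 * Nn l + 2 + m)) := by
  have hT1 : 1 ≤ T := by have := matT_ge2 l Lnet k s hL hk1 hs1; omega
  have e := F_eval11 l Lnet rnet v d₁ d₂ x T i j (chP l k s) hi1 hid hj1 hjd
    (by
      intro t₁ t₂ s₁ h
      rw [cw_chP_eq l Lnet rnet v k s hk1 hkl hs1 hs]
      split_ifs <;> first | rfl | tauto)
  rw [cb_chP_eq l Lnet rnet v k s hk1 hkl hs1 hs (T + 1), if_pos hmat] at e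
  have hsum : ∑ s₁ ∈ Finset.Icc 1 (kcF l rnet T),
      cwF l Lnet rnet v (T + 1) 1 1 s₁ (chP l k s) * FM l Lnet rnet v d₁ d₂ x T i j s₁
      = ∑ m ∈ Finset.Icc 1 rnet,
          v k s Lnet 1 m * FM l Lnet rnet v d₁ d₂ x T i j (2 * Nn l + 2 + m) := by
    rw [kcF_eval l rnet T hT1]
    exact sum_scratch_reindex (2 * Nn l + 2) rnet (fun u => v k s Lnet 1 u) _ _
      (by
        intro s₁ _
        rw [cw_chP_eq l Lnet rnet v k s hk1 hkl hs1 hs, if_pos hmat]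
        split_ifs <;> first | rfl | omega)
  rw [hsum] at e
  exact e

lemma F_writeM (hL : 1 ≤ Lnet) (k s : ℕ) (hk1 : 1 ≤ k) (hkl : k ≤ l) (hs1 : 1 ≤ s)
    (hs : s ≤ 4 ^ (l - k)) (T i j : ℕ) (hmat : T + 1 = matT l Lnet k s)
    (hi1 : 1 ≤ i) (hid : i ≤ d₁) (hj1 : 1 ≤ j) (hjd : j ≤ d₂) :
    FM l Lnet rnet v d₁ d₂ x (T + 1) i j (chM l k s) =
      max 0 (-(v k s Lnet 1 0) + ∑ m ∈ Finset.Icc 1 rnet,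
        -(v k s Lnet 1 m) * FM l Lnet rnet v d₁ d₂ x T i j (2 * Nn l + 2 + m)) := by
  have hT1 : 1 ≤ T := by have := matT_ge2 l Lnet k s hL hk1 hs1; omega
  have e := F_eval11 l Lnet rnet v d₁ d₂ x T i j (chM l k s) hi1 hid hj1 hjd
    (by
      intro t₁ t₂ s₁ h
      rw [cw_chM_eq l Lnet rnet v k s hk1 hkl hs1 hs]
      split_ifs <;> first | rfl | tauto)
  rw [cb_chM_eq l Lnet rnet v k s hk1 hkl hs1 hs (T + 1), if_pos hmat] at e
  have hsum : ∑ s₁ ∈ Finset.Icc 1 (kcF l rnet T),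
      cwF l Lnet rnet v (T + 1) 1 1 s₁ (chM l k s) * FM l Lnet rnet v d₁ d₂ x T i j s₁
      = ∑ m ∈ Finset.Icc 1 rnet,
          -(v k s Lnet 1 m) * FM l Lnet rnet v d₁ d₂ x T i j (2 * Nn l + 2 + m) := by
    rw [kcF_eval l rnet T hT1]
    exact sum_scratch_reindex (2 * Nn l + 2) rnet (fun u => -(v k s Lnet 1 u)) _ _
      (by
        intro s₁ _
        rw [cw_chM_eq l Lnet rnet v k s hk1 hkl hs1 hs, if_pos hmat]
        split_ifs <;> first | rfl | omega)
  rw [hsum] at e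
  exact e

lemma F_scr2 (hL : 1 ≤ Lnet) (k s t m : ℕ) (hk1 : 1 ≤ k) (hkl : k ≤ l) (hs1 : 1 ≤ s)
    (hs : s ≤ 4 ^ (l - k)) (ht2 : 2 ≤ t) (ht : t ≤ Lnet) (hm1 : 1 ≤ m) (hm : m ≤ rnet)
    (T i j : ℕ) (hT : T + 1 = startk l Lnet k + (s - 1) * Lnet + (t - 1))
    (hi1 : 1 ≤ i) (hid : i ≤ d₁) (hj1 : 1 ≤ j) (hjd : j ≤ d₂) :
    FM l Lnet rnet v d₁ d₂ x (T + 1) i j (2 * Nn l + 2 + m) =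
      max 0 (v k s (t - 1) m 0 + ∑ m' ∈ Finset.Icc 1 rnet,
        v k s (t - 1) m m' * FM l Lnet rnet v d₁ d₂ x T i j (2 * Nn l + 2 + m')) := by
  have hst : 1 ≤ startk l Lnet k := by unfold startk; omega
  have hT1 : 1 ≤ T := by omega
  have e := F_eval11 l Lnet rnet v d₁ d₂ x T i j (2 * Nn l + 2 + m) hi1 hid hj1 hjd
    (by
      intro t₁ t₂ s₁ h
      rw [cw_scr2_eq l Lnet rnet v hL k s t m hk1 hkl hs1 hs ht2 ht hm1 hm (T + 1) hT]
      exact if_neg (by tauto))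
  rw [cb_scr_eq l Lnet rnet v hL k s t m hk1 hkl hs1 hs (by omega) ht hm1 hm (T + 1) hT] at e
  have hsum : ∑ s₁ ∈ Finset.Icc 1 (kcF l rnet T),
      cwF l Lnet rnet v (T + 1) 1 1 s₁ (2 * Nn l + 2 + m) * FM l Lnet rnet v d₁ d₂ x T i j s₁
      = ∑ m' ∈ Finset.Icc 1 rnet,
          v k s (t - 1) m m' * FM l Lnet rnet v d₁ d₂ x T i j (2 * Nn l + 2 + m') := by
    rw [kcF_eval l rnet T hT1]
    exact sum_scratch_reindex (2 * Nn l + 2) rnet (fun u => v k s (t - 1) m u) _ _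
      (by
        intro s₁ _
        rw [cw_scr2_eq l Lnet rnet v hL k s t m hk1 hkl hs1 hs ht2 ht hm1 hm (T + 1) hT]
        split_ifs <;> first | rfl | omega)
  rw [hsum] at e
  exact e

end FMlem

end CNN6

namespace CNN6

lemma childPM_bounds (l k s c : ℕ) (hk1 : 1 ≤ k) (hkl : k ≤ l) (hs1 : 1 ≤ s)
    (hs : s ≤ 4 ^ (l - k)) (hc1 : 1 ≤ c) (hc4 : c ≤ 4) :
    1 ≤ childP l k s c ∧ childP l k s c ≤ 2 * Nn l + 2 ∧
    1 ≤ childM l k s c ∧ childM l k s c ≤ 2 * Nn l + 2 ∧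
    childP l k s c ≠ childM l k s c := by
  have hN1 : 1 ≤ Nn l := A_one_le l l (by omega)
  unfold childP childM
  split_ifs with hk
  · omega
  · have hpow : 4 ^ (l - (k - 1)) = 4 ^ (l - k) * 4 := by
      rw [show l - (k - 1) = (l - k) + 1 by omega, pow_succ]
    have hc' : 4 * (s - 1) + c ≤ 4 ^ (l - (k - 1)) := by omega
    have := nid_le l (k - 1) (4 * (s - 1) + c) (by omega) (by omega) hc'
    unfold chP chM
    omega

lemma cIdx_11 : cIdx 1 1 = 1 := rfl

lemma cIdx_1D (D : ℕ) (hD : 2 ≤ D) : cIdx 1 D = 2 := by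
  unfold cIdx; rw [if_pos rfl, if_neg (by omega)]

lemma cIdx_D1 (D : ℕ) (hD : 2 ≤ D) : cIdx D 1 = 3 := by
  unfold cIdx; rw [if_neg (by omega), if_pos rfl]

lemma cIdx_DD (D : ℕ) (hD : 2 ≤ D) : cIdx D D = 4 := by
  unfold cIdx; rw [if_neg (by omega), if_neg (by omega)]

section Scr1

variable (l Lnet rnet : ℕ) (v : ℕ → ℕ → ℕ → ℕ → ℕ → ℝ) (d₁ d₂ : ℕ) (x : ℕ → ℕ → ℝ)

lemma F_scr1 (hL : 1 ≤ Lnet) (k s m : ℕ)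
    (hk1 : 1 ≤ k) (hkl : k ≤ l) (hs1 : 1 ≤ s) (hs : s ≤ 4 ^ (l - k))
    (hm1 : 1 ≤ m) (hm : m ≤ rnet) (T i j : ℕ)
    (hT : T + 1 = startk l Lnet k + (s - 1) * Lnet)
    (hi1 : 1 ≤ i) (hj1 : 1 ≤ j) (hid : i + 2 ^ k - 1 ≤ d₁) (hjd : j + 2 ^ k - 1 ≤ d₂) :
    FM l Lnet rnet v d₁ d₂ x (T + 1) i j (2 * Nn l + 2 + m) =
      max 0 (v k s 0 m 0 +
        ((v k s 0 m 1 * FM l Lnet rnet v d₁ d₂ x T i j (childP l k s 1) +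
            -(v k s 0 m 1) * FM l Lnet rnet v d₁ d₂ x T i j (childM l k s 1)) +
         ((v k s 0 m 2 * FM l Lnet rnet v d₁ d₂ x T i (j + 2 ^ (k - 1)) (childP l k s 2) +
             -(v k s 0 m 2) * FM l Lnet rnet v d₁ d₂ x T i (j + 2 ^ (k - 1)) (childM l k s 2)) +
          ((v k s 0 m 3 * FM l Lnet rnet v d₁ d₂ x T (i + 2 ^ (k - 1)) j (childP l k s 3) +
              -(v k s 0 m 3) * FM l Lnet rnet v d₁ d₂ x T (i + 2 ^ (k - 1)) j (childM l k s 3)) +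
           (v k s 0 m 4 *
              FM l Lnet rnet v d₁ d₂ x T (i + 2 ^ (k - 1)) (j + 2 ^ (k - 1)) (childP l k s 4) +
            -(v k s 0 m 4) *
              FM l Lnet rnet v d₁ d₂ x T (i + 2 ^ (k - 1)) (j + 2 ^ (k - 1)) (childM l k s 4)))))) := by
  have hp2 : 1 ≤ 2 ^ (k - 1) := Nat.one_le_two_pow
  have hpow : 2 ^ k = 2 ^ (k - 1) + 2 ^ (k - 1) := by
    have h := pow_succ 2 (k - 1)
    rw [show (k - 1) + 1 = k by omega] at h
    omega
  have hD : 2 ≤ 2 ^ (k - 1) + 1 := by omega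
  have hp : pifun l Lnet (T + 1) = k := by
    apply pifun_eq l Lnet (T + 1) k hL hk1 hkl (by omega)
    rw [startk_succ l Lnet k hk1]
    have := blk_lt (4 ^ (l - k)) Lnet s 1 hs1 hs le_rfl hL
    omega
  have hM : 2 ^ (k - 1) + 1 ≤ MF l Lnet (T + 1) := by
    unfold MF; rw [hp]; omega
  have e := F_eval4off l Lnet rnet v d₁ d₂ x T i j (2 * Nn l + 2 + m) (2 ^ (k - 1) + 1)
    hD hM hi1 hj1 (by omega) (by omega)
    (by
      intro t₁ t₂ s₁ h
      rw [cw_scr1_eq l Lnet rnet v hL k s m hk1 hkl hs1 hs hm1 hm (T + 1) hT]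
      exact if_neg h)
  rw [cb_scr_eq l Lnet rnet v hL k s 1 m hk1 hkl hs1 hs le_rfl hL hm1 hm (T + 1) (by omega),
    show (1 : ℕ) - 1 = 0 from rfl,
    show i + (2 ^ (k - 1) + 1) - 1 = i + 2 ^ (k - 1) by omega,
    show j + (2 ^ (k - 1) + 1) - 1 = j + 2 ^ (k - 1) by omega] at e
  have key : ∀ (a b pi pj c : ℕ), 1 ≤ c → c ≤ 4 →
      (∀ s₁ ∈ Finset.Icc 1 (kcF l rnet T),
        cwF l Lnet rnet v (T + 1) a b s₁ (2 * Nn l + 2 + m) =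
        if s₁ = childP l k s c then v k s 0 m c
        else if s₁ = childM l k s c then -(v k s 0 m c) else 0) →
      ∑ s₁ ∈ Finset.Icc 1 (kcF l rnet T),
          cwF l Lnet rnet v (T + 1) a b s₁ (2 * Nn l + 2 + m) *
            FM l Lnet rnet v d₁ d₂ x T pi pj s₁
        = v k s 0 m c * FM l Lnet rnet v d₁ d₂ x T pi pj (childP l k s c)
          + -(v k s 0 m c) * FM l Lnet rnet v d₁ d₂ x T pi pj (childM l k s c) := by
    intro a b pi pj c hc1 hc4 hW
    obtain ⟨hb1, hb2, hb3, hb4, hne⟩ := childPM_bounds l k s c hk1 hkl hs1 hs hc1 hc4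
    rcases Nat.eq_zero_or_pos T with h0 | hT1
    · obtain ⟨hk', hs'⟩ := blk_start_one l Lnet k s hL hk1 hs1 (by omega)
      subst hk'
      subst hs'
      subst h0
      have hcP : ∀ c', childP l 1 1 c' = 1 := by intro c'; unfold childP; simp
      have hcM : ∀ c', childM l 1 1 c' = 2 := by intro c'; unfold childM; simp
      have h2 : FM l Lnet rnet v d₁ d₂ x 0 pi pj 2 = 0 := by rw [FM_zero]; norm_num
      rw [hcP, hcM, h2, mul_zero, add_zero]
      refine sum_single_coeff _ 1 le_rfl (kcF_pos l rnet 0) _ _ _ ?_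
      intro s₁ hs₁
      have hk1' : kcF l rnet 0 = 1 := rfl
      rw [hk1'] at hs₁
      rw [Finset.mem_Icc] at hs₁
      have hs1' : s₁ = 1 := by omega
      subst hs1'
      rw [hW 1 (by rw [hk1']; exact Finset.mem_Icc.mpr (by omega)), hcP, hcM]
      norm_num
    · exact sum_pair_coeff _ _ _ hne hb1
        (by rw [kcF_eval l rnet T hT1]; omega) hb3
        (by rw [kcF_eval l rnet T hT1]; omega) _ _ _ _ hW
  have h11 := key 1 1 i j 1 le_rfl (by omega)
    (by
      intro s₁ _
      rw [cw_scr1_eq l Lnet rnet v hL k s m hk1 hkl hs1 hs hm1 hm (T + 1) hT,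
        if_pos ⟨Or.inl rfl, Or.inl rfl⟩, cIdx_11])
  have h12 := key 1 (2 ^ (k - 1) + 1) i (j + 2 ^ (k - 1)) 2 (by omega) (by omega)
    (by
      intro s₁ _
      rw [cw_scr1_eq l Lnet rnet v hL k s m hk1 hkl hs1 hs hm1 hm (T + 1) hT,
        if_pos ⟨Or.inl rfl, Or.inr rfl⟩, cIdx_1D _ hD])
  have h13 := key (2 ^ (k - 1) + 1) 1 (i + 2 ^ (k - 1)) j 3 (by omega) (by omega)
    (by
      intro s₁ _
      rw [cw_scr1_eq l Lnet rnet v hL k s m hk1 hkl hs1 hs hm1 hm (T + 1) hT,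
        if_pos ⟨Or.inr rfl, Or.inl rfl⟩, cIdx_D1 _ hD])
  have h14 := key (2 ^ (k - 1) + 1) (2 ^ (k - 1) + 1)
    (i + 2 ^ (k - 1)) (j + 2 ^ (k - 1)) 4 (by omega) (by omega)
    (by
      intro s₁ _
      rw [cw_scr1_eq l Lnet rnet v hL k s m hk1 hkl hs1 hs hm1 hm (T + 1) hT,
        if_pos ⟨Or.inr rfl, Or.inr rfl⟩, cIdx_DD _ hD])
  rw [h11, h12, h13, h14] at e
  exact e

end Scr1

end CNN6

namespace CNN6

section Hier

variable (Lnet rnet : ℕ) (v : ℕ → ℕ → ℕ → ℕ → ℕ → ℝ) (x : ℕ → ℕ → ℝ)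

/-- The component feedforward networks. -/
def g0 : ℕ → ℕ → ℝ → ℝ → ℝ → ℝ → ℝ :=
  fun k s u1 u2 u3 u4 => fnnEval 4 rnet Lnet (v k s) (quad u1 u2 u3 u4)

/-- Value of node `(k, s)` at window position `(i, j)`. -/
def fbar (k s i j : ℕ) : ℝ :=
  hcomp (g0 Lnet rnet v) (k - 1) s (fun u w => x (i + u - 1) (j + w - 1))

/-- The `c`-th input of network `(k, s)` at window position `(i, j)`. -/
def cval (k s c i j : ℕ) : ℝ :=
  if k = 1 then
    x (i + (if 3 ≤ c then 2 ^ (k - 1) else 0)) (j + (if c = 2 ∨ c = 4 then 2 ^ (k - 1) else 0))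
  else
    fbar Lnet rnet v x (k - 1) (4 * (s - 1) + c)
      (i + (if 3 ≤ c then 2 ^ (k - 1) else 0)) (j + (if c = 2 ∨ c = 4 then 2 ^ (k - 1) else 0))

lemma fbar_step (k s i j : ℕ) (hk : 1 ≤ k) (hs : 1 ≤ s) :
    fbar Lnet rnet v x k s i j =
      g0 Lnet rnet v k s (cval Lnet rnet v x k s 1 i j) (cval Lnet rnet v x k s 2 i j)
        (cval Lnet rnet v x k s 3 i j) (cval Lnet rnet v x k s 4 i j) := by
  match k, hk with
  | 1, _ =>
    show hcomp (g0 Lnet rnet v) 0 s _ = _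
    unfold cval
    norm_num [hcomp]
  | (m + 2), _ =>
    show hcomp (g0 Lnet rnet v) (m + 1) s _ = _
    unfold cval
    rw [hcomp]
    norm_num
    rw [show 4 * (s - 1) + 4 = 4 * s by omega]
    congr 1
    all_goals
      rw [if_neg (show ¬(m + 2 = 1) by omega)]
      unfold fbar
      rw [show m + 1 - 1 = m from rfl]
      congr 1
      funext u w
      congr 2 <;> omega

end Hier

end CNN6

namespace CNN6

section Inv

variable (l Lnet rnet : ℕ) (v : ℕ → ℕ → ℕ → ℕ → ℕ → ℝ) (d₁ d₂ : ℕ) (x : ℕ → ℕ → ℝ)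

lemma F_inp_diff (T i j : ℕ) (hi1 : 1 ≤ i) (hid : i ≤ d₁) (hj1 : 1 ≤ j) (hjd : j ≤ d₂) :
    FM l Lnet rnet v d₁ d₂ x T i j 1 - FM l Lnet rnet v d₁ d₂ x T i j 2 = x i j := by
  rcases Nat.eq_zero_or_pos T with h0 | hT
  · subst h0
    rw [FM_zero, FM_zero]
    norm_num
  · obtain ⟨h1, h2⟩ := F_inp l Lnet rnet v d₁ d₂ x T i j hi1 hid hj1 hjd hT
    rw [h1, h2, maxsub]

/-- Reading the two channels of the `c`-th input of network `(k,s)`. -/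
lemma cval_read (hL : 1 ≤ Lnet) (T k s c pi pj i j : ℕ)
    (hk1 : 1 ≤ k) (hkl : k ≤ l) (hs1 : 1 ≤ s) (hs : s ≤ 4 ^ (l - k))
    (hc1 : 1 ≤ c) (hc4 : c ≤ 4)
    (hpi : pi = i + (if 3 ≤ c then 2 ^ (k - 1) else 0))
    (hpj : pj = j + (if c = 2 ∨ c = 4 then 2 ^ (k - 1) else 0))
    (hT : startk l Lnet k ≤ T + 1)
    (hGood : ∀ k' s', 1 ≤ k' → k' ≤ l → 1 ≤ s' → s' ≤ 4 ^ (l - k') →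
      matT l Lnet k' s' ≤ T → ∀ i' j', 1 ≤ i' → 1 ≤ j' →
      i' + 2 ^ k' - 1 ≤ d₁ → j' + 2 ^ k' - 1 ≤ d₂ →
      FM l Lnet rnet v d₁ d₂ x T i' j' (chP l k' s') =
        max 0 (fbar Lnet rnet v x k' s' i' j') ∧
      FM l Lnet rnet v d₁ d₂ x T i' j' (chM l k' s') =
        max 0 (-(fbar Lnet rnet v x k' s' i' j')))
    (hi1 : 1 ≤ i) (hj1 : 1 ≤ j) (hw1 : i + 2 ^ k - 1 ≤ d₁) (hw2 : j + 2 ^ k - 1 ≤ d₂) :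
    FM l Lnet rnet v d₁ d₂ x T pi pj (childP l k s c) -
      FM l Lnet rnet v d₁ d₂ x T pi pj (childM l k s c)
      = cval Lnet rnet v x k s c i j := by
  subst hpi
  subst hpj
  have hp2 : 1 ≤ 2 ^ (k - 1) := Nat.one_le_two_pow
  have hpow : 2 ^ k = 2 ^ (k - 1) + 2 ^ (k - 1) := by
    have h := pow_succ 2 (k - 1)
    rw [show (k - 1) + 1 = k by omega] at h
    omega
  have hoff1 : (if 3 ≤ c then 2 ^ (k - 1) else 0) ≤ 2 ^ (k - 1) := by split <;> omega
  have hoff2 : (if c = 2 ∨ c = 4 then 2 ^ (k - 1) else 0) ≤ 2 ^ (k - 1) := by split <;> omega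
  by_cases hk : k = 1
  · subst hk
    rw [show childP l 1 s c = 1 from by unfold childP; simp,
      show childM l 1 s c = 2 from by unfold childM; simp]
    have e2 : (2 : ℕ) ^ 1 = 2 := by norm_num
    have e1 : (2 : ℕ) ^ (1 - 1) = 1 := by norm_num
    have hdiff := F_inp_diff l Lnet rnet v d₁ d₂ x T
      (i + (if 3 ≤ c then 2 ^ (1 - 1) else 0)) (j + (if c = 2 ∨ c = 4 then 2 ^ (1 - 1) else 0))
      (by omega) (by omega) (by omega) (by omega)
    rw [hdiff]
    simp [cval]
  · have hk2 : 2 ≤ k := by omega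
    have hpow4 : 4 ^ (l - (k - 1)) = 4 ^ (l - k) * 4 := by
      rw [show l - (k - 1) = (l - k) + 1 by omega, pow_succ]
    have hmat : matT l Lnet (k - 1) (4 * (s - 1) + c) ≤ T := by
      have h1 : matT l Lnet (k - 1) (4 * (s - 1) + c) =
          startk l Lnet (k - 1) + (4 * (s - 1) + c) * Lnet := rfl
      have h2 := startk_succ l Lnet (k - 1) (by omega)
      rw [show k - 1 + 1 = k by omega] at h2
      have h3 : (4 * (s - 1) + c) * Lnet ≤ 4 ^ (l - (k - 1)) * Lnet :=
        Nat.mul_le_mul_right _ (by omega)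
      omega
    have hGc := hGood (k - 1) (4 * (s - 1) + c) (by omega) (by omega) (by omega) (by omega)
      hmat (i + (if 3 ≤ c then 2 ^ (k - 1) else 0)) (j + (if c = 2 ∨ c = 4 then 2 ^ (k - 1) else 0))
      (by omega) (by omega)
      (by
        have hpw : 2 ^ (k - 1) + 2 ^ (k - 1) - 1 ≤ 2 ^ k - 1 := by omega
        omega)
      (by omega)
    rw [show childP l k s c = chP l (k - 1) (4 * (s - 1) + c) from by unfold childP; rw [if_neg hk],
      show childM l k s c = chM l (k - 1) (4 * (s - 1) + c) from by unfold childM; rw [if_neg hk],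
      hGc.1, hGc.2, maxsub]
    simp only [cval, if_neg hk]

/-- State invariant: materialized node channels. -/
def GoodP (T : ℕ) : Prop :=
  ∀ k s, 1 ≤ k → k ≤ l → 1 ≤ s → s ≤ 4 ^ (l - k) → matT l Lnet k s ≤ T →
    ∀ i j, 1 ≤ i → 1 ≤ j → i + 2 ^ k - 1 ≤ d₁ → j + 2 ^ k - 1 ≤ d₂ →
      FM l Lnet rnet v d₁ d₂ x T i j (chP l k s) = max 0 (fbar Lnet rnet v x k s i j) ∧
      FM l Lnet rnet v d₁ d₂ x T i j (chM l k s) = max 0 (-(fbar Lnet rnet v x k s i j))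

/-- State invariant: scratch channels during a network block. -/
def ScrP (T : ℕ) : Prop :=
  ∀ k s t, 1 ≤ k → k ≤ l → 1 ≤ s → s ≤ 4 ^ (l - k) → 1 ≤ t → t ≤ Lnet →
    T + 1 = startk l Lnet k + (s - 1) * Lnet + t →
    ∀ m, 1 ≤ m → m ≤ rnet → ∀ i j, 1 ≤ i → 1 ≤ j →
      i + 2 ^ k - 1 ≤ d₁ → j + 2 ^ k - 1 ≤ d₂ →
      FM l Lnet rnet v d₁ d₂ x T i j (2 * Nn l + 2 + m) =
        fnnNeuron 4 rnet (v k s)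
          (quad (cval Lnet rnet v x k s 1 i j) (cval Lnet rnet v x k s 2 i j)
            (cval Lnet rnet v x k s 3 i j) (cval Lnet rnet v x k s 4 i j)) t m

lemma main_inv (hL : 1 ≤ Lnet) :
    ∀ T, GoodP l Lnet rnet v d₁ d₂ x T ∧ ScrP l Lnet rnet v d₁ d₂ x T := by
  intro T
  induction T with
  | zero =>
    constructor
    · intro k s hk1 hkl hs1 hs hmat i j _ _ _ _
      exact absurd hmat (by have := matT_ge2 l Lnet k s hL hk1 hs1; omega)
    · intro k s t hk1 hkl hs1 hs ht1 ht hT m hm1 hm i j _ _ _ _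
      exfalso
      have : 1 ≤ startk l Lnet k := by unfold startk; omega
      omega
  | succ T ih =>
    obtain ⟨ihG, ihS⟩ := ih
    have hGoodT : ∀ k' s', 1 ≤ k' → k' ≤ l → 1 ≤ s' → s' ≤ 4 ^ (l - k') →
        matT l Lnet k' s' ≤ T → ∀ i' j', 1 ≤ i' → 1 ≤ j' →
        i' + 2 ^ k' - 1 ≤ d₁ → j' + 2 ^ k' - 1 ≤ d₂ →
        FM l Lnet rnet v d₁ d₂ x T i' j' (chP l k' s') =
          max 0 (fbar Lnet rnet v x k' s' i' j') ∧
        FM l Lnet rnet v d₁ d₂ x T i' j' (chM l k' s') =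
          max 0 (-(fbar Lnet rnet v x k' s' i' j')) := ihG
    constructor
    · -- GoodP (T + 1)
      intro k s hk1 hkl hs1 hs hmat i j hi1 hj1 hw1 hw2
      have h2k : 1 ≤ 2 ^ k := Nat.one_le_two_pow
      have hiD : i ≤ d₁ := by omega
      have hjD : j ≤ d₂ := by omega
      rcases Nat.lt_or_ge (matT l Lnet k s) (T + 1) with hlt | hge
      · have hmatT : matT l Lnet k s ≤ T := by omega
        obtain ⟨hP, hM⟩ := ihG k s hk1 hkl hs1 hs hmatT i j hi1 hj1 hw1 hw2
        constructor
        · rw [F_copyP l Lnet rnet v d₁ d₂ x hL k s hk1 hkl hs1 hs T i j hmatT hi1 hiD hj1 hjD,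
            hP, max00]
        · rw [F_copyM l Lnet rnet v d₁ d₂ x hL k s hk1 hkl hs1 hs T i j hmatT hi1 hiD hj1 hjD,
            hM, max00]
      · have hmatEq : T + 1 = matT l Lnet k s := by omega
        have hTblk : T + 1 = startk l Lnet k + (s - 1) * Lnet + Lnet := by
          have h2 : (s - 1) * Lnet + Lnet = s * Lnet := by
            have h3 : s - 1 + 1 = s := by omega
            calc (s - 1) * Lnet + Lnet = ((s - 1) + 1) * Lnet := by ring
            _ = s * Lnet := by rw [h3]
          have h4 : matT l Lnet k s = startk l Lnet k + s * Lnet := rfl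
          omega
        have hscr := ihS k s Lnet hk1 hkl hs1 hs hL le_rfl hTblk
        have hfb := fbar_step Lnet rnet v x k s i j hk1 hs1
        have hsum : ∀ w : ℕ → ℝ, ∑ m ∈ Finset.Icc 1 rnet,
            w m * FM l Lnet rnet v d₁ d₂ x T i j (2 * Nn l + 2 + m)
            = ∑ m ∈ Finset.Icc 1 rnet, w m * fnnNeuron 4 rnet (v k s)
                (quad (cval Lnet rnet v x k s 1 i j) (cval Lnet rnet v x k s 2 i j)
                  (cval Lnet rnet v x k s 3 i j) (cval Lnet rnet v x k s 4 i j)) Lnet m := by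
          intro w
          refine Finset.sum_congr rfl ?_
          intro m hm
          rw [Finset.mem_Icc] at hm
          rw [hscr m hm.1 hm.2 i j hi1 hj1 hw1 hw2]
        constructor
        · rw [F_writeP l Lnet rnet v d₁ d₂ x hL k s hk1 hkl hs1 hs T i j hmatEq hi1 hiD hj1 hjD,
            hsum, hfb]
          rfl
        · rw [F_writeM l Lnet rnet v d₁ d₂ x hL k s hk1 hkl hs1 hs T i j hmatEq hi1 hiD hj1 hjD,
            hsum, hfb]
          congr 1
          unfold g0 fnnEval
          rw [neg_add]
          congr 1
          rw [← Finset.sum_neg_distrib]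
          refine Finset.sum_congr rfl ?_
          intro m _
          ring
    · -- ScrP (T + 1)
      intro k s t hk1 hkl hs1 hs ht1 ht hTeq m hm1 hm i j hi1 hj1 hw1 hw2
      have h2k : 1 ≤ 2 ^ k := Nat.one_le_two_pow
      rcases Nat.eq_or_lt_of_le ht1 with h1 | h2
      · -- t = 1
        have ht' : t = 1 := h1.symm
        subst ht'
        have e := F_scr1 l Lnet rnet v d₁ d₂ x hL k s m hk1 hkl hs1 hs hm1 hm T i j
          (by omega) hi1 hj1 hw1 hw2
        have hTst : startk l Lnet k ≤ T + 1 := by omega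
        have hd1 := cval_read l Lnet rnet v d₁ d₂ x hL T k s 1 i j i j hk1 hkl hs1 hs
          le_rfl (by omega) (by norm_num) (by norm_num) hTst hGoodT hi1 hj1 hw1 hw2
        have hd2 := cval_read l Lnet rnet v d₁ d₂ x hL T k s 2 i (j + 2 ^ (k - 1)) i j
          hk1 hkl hs1 hs (by omega) (by omega) (by norm_num) (by norm_num) hTst hGoodT
          hi1 hj1 hw1 hw2
        have hd3 := cval_read l Lnet rnet v d₁ d₂ x hL T k s 3 (i + 2 ^ (k - 1)) j i j
          hk1 hkl hs1 hs (by omega) (by omega) (by norm_num) (by norm_num) hTst hGoodT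
          hi1 hj1 hw1 hw2
        have hd4 := cval_read l Lnet rnet v d₁ d₂ x hL T k s 4 (i + 2 ^ (k - 1))
          (j + 2 ^ (k - 1)) i j hk1 hkl hs1 hs (by omega) (by omega) (by norm_num)
          (by norm_num) hTst hGoodT hi1 hj1 hw1 hw2
        have comb : ∀ (a P M C : ℝ), P - M = C → a * P + -a * M = a * C := by
          intro a P M C h
          rw [← h]
          ring
        rw [comb _ _ _ _ hd1, comb _ _ _ _ hd2, comb _ _ _ _ hd3, comb _ _ _ _ hd4] at e
        rw [e]
        show _ = fnnNeuron 4 rnet (v k s) _ (0 + 1) m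
        rw [fnnNeuron]
        norm_num
        rw [sum_Icc4]
        simp only [fnnNeuron, quad]
        norm_num
        congr 1
        ring
      · -- t ≥ 2
        obtain ⟨t', rfl⟩ : ∃ t', t = t' + 1 := ⟨t - 1, by omega⟩
        have ht'1 : 1 ≤ t' := by omega
        have e := F_scr2 l Lnet rnet v d₁ d₂ x hL k s (t' + 1) m hk1 hkl hs1 hs (by omega)
          ht hm1 hm T i j (by omega)
          hi1 (by omega) hj1 (by omega)
        have hprev := ihS k s t' hk1 hkl hs1 hs ht'1 (by omega) (by omega) 
        rw [e]
        rw [fnnNeuron]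
        rw [if_neg (by omega)]
        congr 1
        rw [show t' + 1 - 1 = t' from rfl]
        congr 1
        refine Finset.sum_congr rfl ?_
        intro m' hm'
        rw [Finset.mem_Icc] at hm'
        rw [hprev m' hm'.1 hm'.2 i j hi1 hj1 hw1 hw2]

end Inv

end CNN6

namespace CNN6

lemma abs_le_one_imp (Bn : ℝ) (hBn : 1 ≤ Bn) (a : ℝ) (h : a = 0 ∨ a = 1 ∨ a = -1) :
    |a| ≤ Bn := by
  rcases h with h | h | h <;> subst h <;> simp <;> linarith

lemma cIdx_bounds (t₁ t₂ : ℕ) : 1 ≤ cIdx t₁ t₂ ∧ cIdx t₁ t₂ ≤ 4 := by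
  unfold cIdx
  split_ifs <;> omega

lemma node_decode_exists (l : ℕ) (s₂ : ℕ) (h3 : 3 ≤ s₂) (h4 : s₂ ≤ 2 * Nn l + 2) :
    ∃ k' s', 1 ≤ k' ∧ k' ≤ l ∧ 1 ≤ s' ∧ s' ≤ 4 ^ (l - k') ∧
      kOfN l ((s₂ - 1) / 2) = k' ∧ (s₂ - 1) / 2 - A l (k' - 1) = s' := by
  obtain ⟨k', hk'1, hk'l, hlt, hle⟩ := node_decomp l l le_rfl ((s₂ - 1) / 2)
    (by omega) (by unfold Nn at h4; omega)
  have hA : A l k' = A l (k' - 1) + 4 ^ (l - k') := by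
    have h1 := A_succ l (k' - 1)
    rw [show k' - 1 + 1 = k' by omega] at h1
    exact h1
  exact ⟨k', (s₂ - 1) / 2 - A l (k' - 1), hk'1, hk'l, by omega, by omega,
    kOfN_eq l k' _ hk'1 hk'l hlt hle, rfl⟩

lemma weights_bound (l Lnet rnet : ℕ) (v : ℕ → ℕ → ℕ → ℕ → ℕ → ℝ) (Bn : ℝ)
    (hBn : 1 ≤ Bn) (hl : 1 ≤ l) (hL : 1 ≤ Lnet) (hr : 1 ≤ rnet)
    (hv : ∀ k ∈ Finset.Icc 1 l, ∀ s ∈ Finset.Icc 1 (4 ^ (l - k)),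
      ∀ l' i j, RelW 4 rnet Lnet l' i j → |v k s l' i j| ≤ Bn) :
    CNNWeightsBound (Nn l * Lnet + l) (kcF l rnet) (MF l Lnet) (p0 l Lnet rnet v) Bn := by
  have hB0 : (0 : ℝ) ≤ Bn := by linarith
  refine ⟨?_, ?_, ?_⟩
  · intro r hrmem t₁ _ t₂ _ s₁ hs₁mem s₂ hs₂mem
    rw [Finset.mem_Icc] at hs₁mem hs₂mem
    show |cwF l Lnet rnet v r t₁ t₂ s₁ s₂| ≤ Bn
    by_cases h1 : s₂ = 1
    · subst h1
      rw [cw_ch1]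
      split_ifs <;> exact abs_le_one_imp Bn hBn _ (by norm_num)
    by_cases h2 : s₂ = 2
    · subst h2
      rw [cw_ch2]
      split_ifs <;> exact abs_le_one_imp Bn hBn _ (by norm_num)
    by_cases h3 : s₂ ≤ 2 * Nn l + 2
    · -- node channel
      have h3' : 3 ≤ s₂ := by omega
      obtain ⟨k', s', hk'1, hk'l, hs'1, hs', hkeq, hseq⟩ := node_decode_exists l s₂ h3' h3
      unfold cwF
      rw [if_neg h1, if_neg h2, if_pos h3, hkeq, hseq]
      split_ifs with c1 c2 c3 c4
      · -- sign * v
        rw [one_mul]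
        refine hv k' (Finset.mem_Icc.mpr ⟨hk'1, hk'l⟩) s' (Finset.mem_Icc.mpr ⟨hs'1, hs'⟩)
          Lnet 1 _ (Or.inr ⟨rfl, rfl, ?_⟩)
        rw [if_neg (by omega)]
        omega
      · rw [neg_one_mul, abs_neg]
        refine hv k' (Finset.mem_Icc.mpr ⟨hk'1, hk'l⟩) s' (Finset.mem_Icc.mpr ⟨hs'1, hs'⟩)
          Lnet 1 _ (Or.inr ⟨rfl, rfl, ?_⟩)
        rw [if_neg (by omega)]
        omega
      · exact abs_le_one_imp Bn hBn _ (by norm_num)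
      · exact abs_le_one_imp Bn hBn _ (by norm_num)
      · exact abs_le_one_imp Bn hBn _ (by norm_num)
      · exact abs_le_one_imp Bn hBn _ (by norm_num)
    by_cases h4 : s₂ ≤ 2 * Nn l + 2 + rnet
    · -- scratch channel
      unfold cwF
      rw [if_neg h1, if_neg h2, if_neg h3, if_pos h4]
      split_ifs with g1 g2 g3 g4 g5
      · -- gather, +v
        obtain ⟨gk1, gkl, gst, glt⟩ := g1
        have hsb : (r - startk l Lnet (pifun l Lnet r)) / Lnet + 1
            ≤ 4 ^ (l - pifun l Lnet r) := by
          have h5 := (Nat.div_lt_iff_lt_mul (show 0 < Lnet by omega)).mpr glt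
          exact Nat.succ_le_of_lt h5
        obtain ⟨hc1, hc4⟩ := cIdx_bounds t₁ t₂
        refine hv _ (Finset.mem_Icc.mpr ⟨gk1, gkl⟩) _ (Finset.mem_Icc.mpr ⟨Nat.le_add_left 1 _, hsb⟩)
          0 _ _ (Or.inl ⟨by omega, by omega, by omega, ?_⟩)
        rw [if_pos rfl]
        omega
      · -- gather, -v
        obtain ⟨gk1, gkl, gst, glt⟩ := g1
        have hsb : (r - startk l Lnet (pifun l Lnet r)) / Lnet + 1
            ≤ 4 ^ (l - pifun l Lnet r) := by
          have h5 := (Nat.div_lt_iff_lt_mul (show 0 < Lnet by omega)).mpr glt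
          exact Nat.succ_le_of_lt h5
        obtain ⟨hc1, hc4⟩ := cIdx_bounds t₁ t₂
        rw [abs_neg]
        refine hv _ (Finset.mem_Icc.mpr ⟨gk1, gkl⟩) _ (Finset.mem_Icc.mpr ⟨Nat.le_add_left 1 _, hsb⟩)
          0 _ _ (Or.inl ⟨by omega, by omega, by omega, ?_⟩)
        rw [if_pos rfl]
        omega
      · exact abs_le_one_imp Bn hBn _ (by norm_num)
      · exact abs_le_one_imp Bn hBn _ (by norm_num)
      · -- linear layer
        obtain ⟨gk1, gkl, gst, glt⟩ := g1
        have hsb : (r - startk l Lnet (pifun l Lnet r)) / Lnet + 1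
            ≤ 4 ^ (l - pifun l Lnet r) := by
          have h5 := (Nat.div_lt_iff_lt_mul (show 0 < Lnet by omega)).mpr glt
          exact Nat.succ_le_of_lt h5
        have hmod : (r - startk l Lnet (pifun l Lnet r)) % Lnet < Lnet :=
          Nat.mod_lt _ (by omega)
        refine hv _ (Finset.mem_Icc.mpr ⟨gk1, gkl⟩) _ (Finset.mem_Icc.mpr ⟨Nat.le_add_left 1 _, hsb⟩)
          _ _ _ (Or.inl ⟨hmod, by omega, by omega, ?_⟩)
        rw [if_neg g2]
        omega
      · exact abs_le_one_imp Bn hBn _ (by norm_num)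
      · exact abs_le_one_imp Bn hBn _ (by norm_num)
    · unfold cwF
      rw [if_neg h1, if_neg h2, if_neg h3, if_neg h4]
      exact abs_le_one_imp Bn hBn _ (by norm_num)
  · intro r hrmem s₂ hs₂mem
    rw [Finset.mem_Icc] at hs₂mem
    show |cbF l Lnet rnet v r s₂| ≤ Bn
    by_cases h1 : s₂ ≤ 2
    · unfold cbF
      rw [if_pos h1]
      exact abs_le_one_imp Bn hBn _ (by norm_num)
    by_cases h3 : s₂ ≤ 2 * Nn l + 2
    · obtain ⟨k', s', hk'1, hk'l, hs'1, hs', hkeq, hseq⟩ :=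
        node_decode_exists l s₂ (by omega) h3
      unfold cbF
      rw [if_neg h1, if_pos h3, hkeq, hseq]
      split_ifs with c1 c2
      · rw [one_mul]
        refine hv k' (Finset.mem_Icc.mpr ⟨hk'1, hk'l⟩) s' (Finset.mem_Icc.mpr ⟨hs'1, hs'⟩)
          Lnet 1 _ (Or.inr ⟨rfl, rfl, Nat.zero_le _⟩)
      · rw [neg_one_mul, abs_neg]
        refine hv k' (Finset.mem_Icc.mpr ⟨hk'1, hk'l⟩) s' (Finset.mem_Icc.mpr ⟨hs'1, hs'⟩)
          Lnet 1 _ (Or.inr ⟨rfl, rfl, Nat.zero_le _⟩)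
      · exact abs_le_one_imp Bn hBn _ (by norm_num)
    by_cases h4 : s₂ ≤ 2 * Nn l + 2 + rnet
    · unfold cbF
      rw [if_neg h1, if_neg h3, if_pos h4]
      split_ifs with g1
      · obtain ⟨gk1, gkl, gst, glt⟩ := g1
        have hsb : (r - startk l Lnet (pifun l Lnet r)) / Lnet + 1
            ≤ 4 ^ (l - pifun l Lnet r) := by
          have h5 := (Nat.div_lt_iff_lt_mul (show 0 < Lnet by omega)).mpr glt
          exact Nat.succ_le_of_lt h5
        have hmod : (r - startk l Lnet (pifun l Lnet r)) % Lnet < Lnet :=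
          Nat.mod_lt _ (by omega)
        rcases Nat.eq_zero_or_pos ((r - startk l Lnet (pifun l Lnet r)) % Lnet) with hz | hz
        · rw [hz]
          refine hv _ (Finset.mem_Icc.mpr ⟨gk1, gkl⟩) _ (Finset.mem_Icc.mpr ⟨Nat.le_add_left 1 _, hsb⟩)
            0 _ _ (Or.inl ⟨by omega, by omega, by omega, by split <;> omega⟩)
        · refine hv _ (Finset.mem_Icc.mpr ⟨gk1, gkl⟩) _ (Finset.mem_Icc.mpr ⟨Nat.le_add_left 1 _, hsb⟩)
            _ _ _ (Or.inl ⟨hmod, by omega, by omega, by split <;> omega⟩)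
      · exact abs_le_one_imp Bn hBn _ (by norm_num)
    · unfold cbF
      rw [if_neg h1, if_neg h3, if_neg h4]
      exact abs_le_one_imp Bn hBn _ (by norm_num)
  · intro s _
    show |coF l s| ≤ Bn
    unfold coF
    split_ifs <;> exact abs_le_one_imp Bn hBn _ (by norm_num)

end CNN6
/-- **Lemma 6** (CNNs compute hierarchical compositions of feedforward networks): if
`ḡ_{net,k,s} : ℝ⁴ → ℝ` are ReLU networks with `L_net` hidden layers, `r_net` neurons per
layer and weights bounded by `B_n ≥ 1`, then the max-pooling `m̄` of the level-`l`
hierarchical composition of the `ḡ_{net,k,s}` is computed exactly on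
`[-2,2]^{d₁×d₂}` by a convolutional network in `F^{CNN}_{l_net,k,M}` with
`l_net = ((4^l - 1)/3)·L_net + l`, `k_s = (2·4^l + 4)/3 + r_net`, `M_s = 2^{π(s)}`, all of
whose weights are bounded by `B_n`. -/
theorem statement_10 (d₁ d₂ l Lnet rnet : ℕ) (hl : 0 < l) (h2l : 2 ^ l ≤ min d₁ d₂)
    (hLnet : 0 < Lnet) (hrnet : 0 < rnet) (Bn : ℝ) (hBn : 1 ≤ Bn)
    (v : ℕ → ℕ → ℕ → ℕ → ℕ → ℝ)
    (hv : ∀ k ∈ Finset.Icc 1 l, ∀ s ∈ Finset.Icc 1 (4 ^ (l - k)),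
      ∀ l' i j, RelW 4 rnet Lnet l' i j → |v k s l' i j| ≤ Bn) :
    ∃ p : CNNParams,
      CNNWeightsBound ((4 ^ l - 1) / 3 * Lnet + l)
        (fun r => if r = 0 then 1 else (2 * 4 ^ l + 4) / 3 + rnet)
        (fun s => 2 ^ pifun l Lnet s) p Bn ∧
      ∀ x : ℕ → ℕ → ℝ,
        (∀ i ∈ Finset.Icc 1 d₁, ∀ j ∈ Finset.Icc 1 d₂, x i j ∈ Set.Icc (-2 : ℝ) 2) →
        mpool d₁ d₂ l
            (hierF (fun k s u1 u2 u3 u4 => fnnEval 4 rnet Lnet (v k s) (quad u1 u2 u3 u4)) l)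
            x
          = cnnOut d₁ d₂ ((4 ^ l - 1) / 3 * Lnet + l)
              (fun r => if r = 0 then 1 else (2 * 4 ^ l + 4) / 3 + rnet)
              (fun s => 2 ^ pifun l Lnet s) p x := by
  classical
  have h3N := CNN6.three_Nn l
  have hL4 : (4 ^ l - 1) / 3 = CNN6.Nn l := by omega
  have hkc : (fun r => if r = 0 then 1 else (2 * 4 ^ l + 4) / 3 + rnet)
      = CNN6.kcF l rnet := by
    funext r
    unfold CNN6.kcF
    by_cases hr0 : r = 0
    · simp [hr0]
    · rw [if_neg hr0, if_neg hr0]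
      omega
  have hMfun : (fun s => 2 ^ pifun l Lnet s) = CNN6.MF l Lnet := rfl
  have hLtot : (4 ^ l - 1) / 3 * Lnet + l = CNN6.Nn l * Lnet + l := by rw [hL4]
  have hl1 : 1 ≤ l := hl
  have hA : CNN6.Nn l = CNN6.A l (l - 1) + 1 := CNN6.Nn_eq_A_pred l hl1
  have hmul : CNN6.Nn l * Lnet = CNN6.A l (l - 1) * Lnet + Lnet := by rw [hA]; ring
  have hcomm : Lnet * CNN6.A l (l - 1) = CNN6.A l (l - 1) * Lnet := mul_comm _ _
  have h4mul : 4 ^ (l - l) * Lnet = Lnet := by simp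
  refine ⟨CNN6.p0 l Lnet rnet v, ?_, ?_⟩
  · rw [hLtot, hkc, hMfun]
    exact CNN6.weights_bound l Lnet rnet v Bn hBn hl1 hLnet hrnet hv
  · intro x hx
    rw [hLtot, hkc, hMfun]
    have hG := (CNN6.main_inv l Lnet rnet v d₁ d₂ x hLnet (CNN6.Nn l * Lnet + l)).1
    have hmat : CNN6.matT l Lnet l 1 = CNN6.Nn l * Lnet + l := by
      unfold CNN6.matT CNN6.startk
      omega
    have hch1 : CNN6.chP l l 1 = 2 * CNN6.Nn l + 1 := by unfold CNN6.chP; omega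
    have hch2 : CNN6.chM l l 1 = 2 * CNN6.Nn l + 2 := by unfold CNN6.chM; omega
    have hpl : pifun l Lnet (CNN6.Nn l * Lnet + l) = l := by
      apply CNN6.pifun_eq l Lnet _ l hLnet hl1 le_rfl
      · unfold CNN6.startk
        omega
      · rw [CNN6.startk_succ l Lnet l hl1]
        unfold CNN6.startk
        have h4 : 4 ^ (l - l) = 1 := by simp
        omega
    have hM2 : CNN6.MF l Lnet (CNN6.Nn l * Lnet + l) = 2 ^ l := by
      unfold CNN6.MF
      rw [hpl]
    have hLt1 : 1 ≤ CNN6.Nn l * Lnet + l := by omega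
    have hkcL : CNN6.kcF l rnet (CNN6.Nn l * Lnet + l) = 2 * CNN6.Nn l + 2 + rnet :=
      CNN6.kcF_eval l rnet _ hLt1
    have h2ld : 2 ^ l ≤ d₁ := le_trans h2l (min_le_left _ _)
    have h2ld2 : 2 ^ l ≤ d₂ := le_trans h2l (min_le_right _ _)
    unfold mpool cnnOut
    rw [hM2]
    apply congrArg sSup
    apply Set.image_congr
    intro ij hij
    rw [Set.mem_prod, Set.mem_Icc, Set.mem_Icc] at hij
    obtain ⟨⟨hi1, hi2⟩, hj1, hj2⟩ := hij
    have hfb := hG l 1 hl1 le_rfl le_rfl (by norm_num) (le_of_eq hmat) ij.1 ij.2 hi1 hj1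
      (by omega) (by omega)
    have hsum : ∑ s ∈ Finset.Icc 1 (CNN6.kcF l rnet (CNN6.Nn l * Lnet + l)),
        (CNN6.p0 l Lnet rnet v).co s *
          featMap d₁ d₂ (CNN6.kcF l rnet) (CNN6.MF l Lnet) (CNN6.p0 l Lnet rnet v) x
            (CNN6.Nn l * Lnet + l) ij.1 ij.2 s
        = 1 * CNN6.FM l Lnet rnet v d₁ d₂ x (CNN6.Nn l * Lnet + l) ij.1 ij.2
              (2 * CNN6.Nn l + 1)
          + (-1) * CNN6.FM l Lnet rnet v d₁ d₂ x (CNN6.Nn l * Lnet + l) ij.1 ij.2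
              (2 * CNN6.Nn l + 2) := by
      rw [hkcL]
      exact CNN6.sum_pair_coeff _ _ _ (by omega) (by omega) (by omega) (by omega) (by omega)
        1 (-1) _ _ (fun s₁ _ => rfl)
    rw [hsum]
    rw [hch1] at hfb
    rw [hch2] at hfb
    rw [hfb.1, hfb.2]
    have : (1 : ℝ) * max 0 (CNN6.fbar Lnet rnet v x l 1 ij.1 ij.2) +
        (-1) * max 0 (-(CNN6.fbar Lnet rnet v x l 1 ij.1 ij.2))
        = CNN6.fbar Lnet rnet v x l 1 ij.1 ij.2 := by
      rw [one_mul, neg_one_mul, ← sub_eq_add_neg, CNN6.maxsub]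
    rw [this]
    rfl
end
end

section
/- Set f(z) = log(z/(1−z)) for 0 < z < 1, f(1) = ∞, f(0) = −∞, and let φ(z) = log(1+exp(−z)) be the logistic loss. Let K ∈ ℕ with K ≥ 6, let m: ℝ^{d·l} → [0,1] and let ḡ: ℝ^{d_1×d_2} → ℝ satisfy ‖ḡ − m‖_{∞,[0,1]^{d_1×d_2}} ≤ ε for some 0 ≤ ε ≤ 1/K. Then there exists a ReLU neural network f̄: ℝ → ℝ with one hidden layer of 3K+9 neurons, all of whose weights are bounded in absolute value by K, such that for every network f̃: ℝ → ℝ with the same structure whose weights differ in supremum norm by at most 0 ≤ ε̄ ≤ 1 from those of f̄, the composition f̃∘ḡ satisfies ‖f̃∘ḡ‖_{∞,[0,1]^{d_1×d_2}} ≤ 132·K²·ε̄ + log K, and sup_{x ∈ [0,1]^{d_1×d_2}} ( |m(x)·(φ(f̃(ḡ(x))) − φ(f(m(x))))| + |(1−m(x))·(φ(−f̃(ḡ(x))) − φ(−f(m(x))))| ) ≤ c_{16}·(log K/K + ε) + 132·K²·ε̄. -/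
/-!
The network realizes the piecewise linear interpolation `F` of the logit `f(z) = log (z/(1-z))`
at the nodes `k/K`, `0 < k < K`, constant outside `[1/K, 1 - 1/K]`; each cell costs two ReLUs.
For `K ≥ 6` its slopes `K (f((k+1)/K) - f(k/K))` lie in `[0, K]`, and `|F| ≤ log K`.
Since the sigmoid `σ` inverts `f`, `q = σ(F(z))` lies in the same cell `[j/K, (j+1)/K]` as the
clamp of `z`, so `1/K ≤ q ≤ 1 - 1/K` and `|m(x) - q| ≤ δ := 2/K + ε` when `z = ḡ(x)`.
Now `φ(F) = -log σ(F)`, `φ` is 1-Lipschitz, and `p |log p - log q| ≤ δ + δ²/q ≤ 4δ`, which bounds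
the two loss terms by `8δ` plus the effect of the weight perturbation; the latter is
`O(K² εb)` because there are `3K + 9` neurons, each moving by `O(K εb)` on inputs `|z| ≤ 2`.
-/

open Finset

noncomputable section

/-- The logistic loss `φ(z) = log (1 + exp (-z))`. -/
def logloss (z : ℝ) : ℝ := Real.log (1 + Real.exp (-z))

/-- Membership of an image in `[0,1]^{d₁ × d₂}`. -/
def cube (d₁ d₂ : ℕ) (x : ℕ → ℕ → ℝ) : Prop :=
  ∀ i ∈ Finset.Icc 1 d₁, ∀ j ∈ Finset.Icc 1 d₂, x i j ∈ Set.Icc (0 : ℝ) 1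

/-- One-hidden-layer ReLU network with `r` neurons:
`z ↦ w₀^{(1)} + ∑ᵢ wᵢ^{(1)} σ(w_{i,1}^{(0)} z + w_{i,0}^{(0)})`. -/
def shallowEval (r : ℕ) (w1 wa wb : ℕ → ℝ) (z : ℝ) : ℝ :=
  w1 0 + ∑ i ∈ Finset.Icc 1 r, w1 i * max 0 (wa i * z + wb i)

open Real

namespace LogisticNet

theorem logloss_eq_neg_log_sigmoid (t : ℝ) : logloss t = -log (sigmoid t) := by
  rw [sigmoid_def, log_inv, neg_neg, logloss]

theorem logloss_neg (t : ℝ) : logloss (-t) = t + logloss t := by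
  have h : 1 + exp t = exp t * (1 + exp (-t)) := by
    rw [mul_add, mul_one, ← exp_add, add_neg_cancel, exp_zero, add_comm]
  rw [logloss, logloss, neg_neg, h, log_mul (exp_ne_zero t) (by positivity), log_exp]

theorem logloss_antitone : Antitone logloss := fun a b hab =>
  log_le_log (by positivity) (by gcongr)

theorem abs_logloss_sub_le (a b : ℝ) : |logloss a - logloss b| ≤ |a - b| := by
  wlog hab : a ≤ b generalizing a b
  · rw [abs_sub_comm, abs_sub_comm a]
    exact this b a (le_of_not_ge hab)
  have h₁ := logloss_antitone hab
  have h₂ := logloss_antitone (neg_le_neg hab)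
  rw [logloss_neg, logloss_neg] at h₂
  rw [abs_of_nonneg (sub_nonneg.2 h₁), abs_sub_comm, abs_of_nonneg (sub_nonneg.2 hab)]
  linarith

theorem mul_abs_log_sub_log_le {p q δ : ℝ} (hp : 0 ≤ p) (hq : 0 < q) (hpq : |p - q| ≤ δ) :
    p * |log p - log q| ≤ δ + δ ^ 2 / q := by
  have hδ : 0 ≤ δ := (abs_nonneg _).trans hpq
  obtain rfl | hp := hp.eq_or_lt
  · simp only [zero_mul]; positivity
  obtain ⟨hδ₁, hδ₂⟩ := abs_le.1 hpq
  rcases le_total p q with hle | hle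
  · have h := one_sub_inv_le_log_of_pos (div_pos hp hq)
    rw [log_div hp.ne' hq.ne', inv_div] at h
    rw [abs_of_nonpos (by linarith [log_le_log hp hle])]
    have : p * (1 - q / p) = p - q := by field_simp
    nlinarith [div_nonneg (sq_nonneg δ) hq.le]
  · have h := log_le_sub_one_of_pos (div_pos hp hq)
    rw [log_div hp.ne' hq.ne'] at h
    rw [abs_of_nonneg (by linarith [log_le_log hq hle])]
    calc p * (log p - log q) ≤ p * (p / q - 1) := by gcongr
      _ = p * (p - q) / q := by field_simp
      _ ≤ (q + δ) * δ / q := by gcongr; linarith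
      _ = δ + δ ^ 2 / q := by field_simp

theorem abs_ite_mul_logloss_add_log_le (c : Prop) [Decidable c] {p : ℝ} (hp : 0 ≤ p) (t s : ℝ) :
    |if c then 0 else p * (logloss t - -log p)| ≤
      p * |log p - log (sigmoid s)| + p * |t - s| := by
  have hrhs : 0 ≤ p * |log p - log (sigmoid s)| + p * |t - s| := by positivity
  split_ifs
  · simpa using hrhs
  have h : logloss t - -log p = (logloss t - logloss s) + (log p - log (sigmoid s)) := by
    rw [logloss_eq_neg_log_sigmoid s]; ring
  rw [abs_mul, abs_of_nonneg hp, h]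
  calc p * |(logloss t - logloss s) + (log p - log (sigmoid s))|
      ≤ p * (|t - s| + |log p - log (sigmoid s)|) :=
        mul_le_mul_of_nonneg_left
          ((abs_add_le _ _).trans (add_le_add (abs_logloss_sub_le t s) le_rfl)) hp
    _ = _ := by ring

theorem logistic_loss_error_le {p s t η δ : ℝ} (hp : p ∈ Set.Icc (0 : ℝ) 1) (hη : η ≤ sigmoid s)
    (hη' : sigmoid s ≤ 1 - η) (hpq : |p - sigmoid s| ≤ δ) (hδ : δ ≤ 3 * η) :
    |if p = 0 then 0 else p * (logloss t - -log p)| +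
      |if p = 1 then 0 else (1 - p) * (logloss (-t) - -log (1 - p))| ≤ 8 * δ + |t - s| := by
  obtain ⟨hp₀, hp₁⟩ := hp
  have hq : 0 < sigmoid s := sigmoid_pos s
  have hq' : 0 < 1 - sigmoid s := sub_pos.2 (sigmoid_lt_one s)
  have hδ₀ : 0 ≤ δ := (abs_nonneg _).trans hpq
  have hsq : ∀ {r : ℝ}, 0 < r → η ≤ r → δ ^ 2 / r ≤ 3 * δ := fun hr hηr => by
    rw [div_le_iff₀ hr]; nlinarith
  have h₁ := mul_abs_log_sub_log_le hp₀ hq hpq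
  have h₂ := mul_abs_log_sub_log_le (δ := δ) (sub_nonneg.2 hp₁) hq'
    (by rwa [sub_sub_sub_cancel_left, abs_sub_comm])
  have e₁ := abs_ite_mul_logloss_add_log_le (p = 0) hp₀ t s
  have e₂ := abs_ite_mul_logloss_add_log_le (p = 1) (sub_nonneg.2 hp₁) (-t) (-s)
  rw [sigmoid_neg, neg_sub_neg, abs_sub_comm s] at e₂
  have := hsq hq hη
  have := hsq hq' (by linarith)
  have : p * |t - s| + (1 - p) * |t - s| = |t - s| := by ring
  linarith

theorem abs_mul_relu_sub_le {c a b c' a' b' z A B ε : ℝ} (hc : |c| ≤ B) (ha : |a| ≤ A)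
    (hb : |b| ≤ A) (hc' : |c' - c| ≤ ε) (ha' : |a' - a| ≤ ε) (hb' : |b' - b| ≤ ε) (hε : ε ≤ 1) :
    |c' * max 0 (a' * z + b') - c * max 0 (a * z + b)| ≤ (A + B + 1) * (|z| + 1) * ε := by
  have hε₀ : 0 ≤ ε := (abs_nonneg _).trans hc'
  have hA : 0 ≤ A := (abs_nonneg _).trans ha
  have hB : 0 ≤ B := (abs_nonneg _).trans hc
  have hz : 0 ≤ |z| := abs_nonneg z
  have hlin : |a' * z + b'| ≤ (A + 1) * (|z| + 1) := by
    have ha'' : |a'| ≤ A + 1 := by linarith [abs_sub_abs_le_abs_sub a' a]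
    have hb'' : |b'| ≤ A + 1 := by linarith [abs_sub_abs_le_abs_sub b' b]
    calc |a' * z + b'| ≤ |a'| * |z| + |b'| := (abs_add_le _ _).trans_eq (by rw [abs_mul])
      _ ≤ (A + 1) * |z| + (A + 1) := by gcongr
      _ = (A + 1) * (|z| + 1) := by ring
  have hdiff : |(a' * z + b') - (a * z + b)| ≤ ε * (|z| + 1) := by
    calc |(a' * z + b') - (a * z + b)| = |(a' - a) * z + (b' - b)| := by ring_nf
      _ ≤ |a' - a| * |z| + |b' - b| := (abs_add_le _ _).trans_eq (by rw [abs_mul])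
      _ ≤ ε * |z| + ε := by gcongr
      _ = ε * (|z| + 1) := by ring
  have hrelu : |max 0 (a' * z + b')| ≤ (A + 1) * (|z| + 1) := by
    rw [abs_of_nonneg (le_max_left _ _)]
    exact max_le (by positivity) ((le_abs_self _).trans hlin)
  have hrelu' : |max 0 (a' * z + b') - max 0 (a * z + b)| ≤ ε * (|z| + 1) := by
    rw [max_comm 0, max_comm 0]
    exact (abs_max_sub_max_le_abs _ _ _).trans hdiff
  calc |c' * max 0 (a' * z + b') - c * max 0 (a * z + b)|
      = |(c' - c) * max 0 (a' * z + b') + c * (max 0 (a' * z + b') - max 0 (a * z + b))| := by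
        ring_nf
    _ ≤ |c' - c| * |max 0 (a' * z + b')| + |c| * |max 0 (a' * z + b') - max 0 (a * z + b)| :=
        (abs_add_le _ _).trans_eq (by rw [abs_mul, abs_mul])
    _ ≤ ε * ((A + 1) * (|z| + 1)) + B * (ε * (|z| + 1)) := by gcongr
    _ = (A + B + 1) * (|z| + 1) * ε := by ring

theorem abs_shallowEval_sub_le {r : ℕ} {w1 wa wb w1' wa' wb' : ℕ → ℝ} {A B ε : ℝ} (z : ℝ)
    (hw1 : ∀ i ∈ Icc 1 r, |w1 i| ≤ B) (hwab : ∀ i ∈ Icc 1 r, |wa i| ≤ A ∧ |wb i| ≤ A)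
    (hε : ε ≤ 1) (hw1' : ∀ i ∈ Icc 0 r, |w1' i - w1 i| ≤ ε)
    (hwab' : ∀ i ∈ Icc 1 r, |wa' i - wa i| ≤ ε ∧ |wb' i - wb i| ≤ ε) :
    |shallowEval r w1' wa' wb' z - shallowEval r w1 wa wb z| ≤
      (1 + r * ((A + B + 1) * (|z| + 1))) * ε := by
  have hneuron : ∀ i ∈ Icc 1 r,
      |w1' i * max 0 (wa' i * z + wb' i) - w1 i * max 0 (wa i * z + wb i)| ≤
        (A + B + 1) * (|z| + 1) * ε := fun i hi =>
    abs_mul_relu_sub_le (hw1 i hi) (hwab i hi).1 (hwab i hi).2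
      (hw1' i (Icc_subset_Icc_left zero_le_one hi)) (hwab' i hi).1 (hwab' i hi).2 hε
  have hsum := (abs_sum_le_sum_abs _ _).trans (sum_le_card_nsmul _ _ _ hneuron)
  rw [Nat.card_Icc, add_tsub_cancel_right, nsmul_eq_mul] at hsum
  calc |shallowEval r w1' wa' wb' z - shallowEval r w1 wa wb z|
      = |(w1' 0 - w1 0) + ∑ i ∈ Icc 1 r,
          (w1' i * max 0 (wa' i * z + wb' i) - w1 i * max 0 (wa i * z + wb i))| := by
        rw [shallowEval, shallowEval, sum_sub_distrib]; congr 1; ring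
    _ ≤ ε + r * ((A + B + 1) * (|z| + 1) * ε) :=
        (abs_add_le _ _).trans (add_le_add (hw1' 0 (by simp)) hsum)
    _ = (1 + r * ((A + B + 1) * (|z| + 1))) * ε := by ring

/-- `logitNode K k = f (k / K)` for the logit `f`. -/
def logitNode (K k : ℕ) : ℝ := log (k / (K - k))

def slope (K k : ℕ) : ℝ := K * (logitNode K (k + 1) - logitNode K k)

def ramp (a h z : ℝ) : ℝ := max 0 (z - a) - max 0 (z - (a + h))

/-- The piecewise linear interpolation of the logit at the nodes `k / K`, `0 < k < K`,
constant outside `[1 / K, 1 - 1 / K]`. -/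
def interp (K : ℕ) (z : ℝ) : ℝ :=
  logitNode K 1 + ∑ k ∈ Icc 1 (K - 2), slope K k * ramp (k / K) (1 / K) z

def clip (K : ℕ) (z : ℝ) : ℝ := max (1 / K) (min z (1 - 1 / K))

section Nodes

variable {K k : ℕ}

theorem sigmoid_logitNode (hk : 0 < k) (hkK : k < K) : sigmoid (logitNode K k) = k / K := by
  have hk' : (0 : ℝ) < k := by exact_mod_cast hk
  have hkK' : (k : ℝ) < K := by exact_mod_cast hkK
  rw [sigmoid_def, logitNode, exp_neg, exp_log (div_pos hk' (sub_pos.2 hkK')), inv_div]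
  field_simp
  ring

theorem abs_logitNode_le (hk : 0 < k) (hkK : k < K) : |logitNode K k| ≤ log K := by
  have hk' : (1 : ℝ) ≤ k := by exact_mod_cast hk
  have hkK' : (k : ℝ) + 1 ≤ K := by exact_mod_cast hkK
  have hpos : 0 < (k : ℝ) / (K - k) := div_pos (by linarith) (by linarith)
  rw [logitNode, abs_le, neg_le, ← log_inv, inv_div]
  constructor
  · exact log_le_log (inv_pos.1 (by rwa [inv_div])) <|
      (div_le_self (by linarith) hk').trans (by linarith)
  · exact log_le_log hpos <| (div_le_self (by linarith) (by linarith)).trans (by linarith)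

theorem logitNode_succ_sub_mem_Icc (hK : 6 ≤ K) (hk : 1 ≤ k) (hkK : k + 2 ≤ K) :
    logitNode K (k + 1) - logitNode K k ∈ Set.Icc (0 : ℝ) 1 := by
  have hk' : (1 : ℝ) ≤ k := by exact_mod_cast hk
  have hkK' : (k : ℝ) + 2 ≤ K := by exact_mod_cast hkK
  have hK' : (6 : ℝ) ≤ K := by exact_mod_cast hK
  have hB : 0 < (k : ℝ) * (K - (k + 1)) := by nlinarith
  have hA : (k : ℝ) * (K - (k + 1)) ≤ (k + 1) * (K - k) := by nlinarith
  -- the ratio is largest, `2 (K - 1) / (K - 2) ≤ 5 / 2 < e`, at `k = 1` and `k = K - 2`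
  have hA' : ((k : ℝ) + 1) * (K - k) ≤ 5 / 2 * (k * (K - (k + 1))) := by
    nlinarith [mul_nonneg (sub_nonneg.2 hk') (by linarith : (0 : ℝ) ≤ K - 2 - k)]
  have hdiff : logitNode K (k + 1) - logitNode K k =
      log ((k + 1) * (K - k) / (k * (K - (k + 1)))) := by
    have hsucc : logitNode K (k + 1) = log ((k + 1) / (K - (k + 1))) := by
      rw [logitNode]; push_cast; rfl
    rw [hsucc, logitNode, ← log_div (div_pos (by linarith) (by linarith)).ne'
      (div_pos (by linarith) (by linarith)).ne']
    congr 1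
    field_simp
  have hpos : 0 < ((k : ℝ) + 1) * (K - k) / (k * (K - (k + 1))) :=
    div_pos (by nlinarith) hB
  rw [hdiff]
  constructor
  · exact log_nonneg ((one_le_div hB).2 hA)
  · rw [log_le_iff_le_exp hpos, div_le_iff₀ hB]
    nlinarith [exp_one_gt_d9]

theorem slope_mem_Icc (hK : 6 ≤ K) (hk : 1 ≤ k) (hkK : k + 2 ≤ K) :
    slope K k ∈ Set.Icc (0 : ℝ) K := by
  obtain ⟨h₀, h₁⟩ := logitNode_succ_sub_mem_Icc hK hk hkK
  exact ⟨by unfold slope; positivity, by unfold slope; nlinarith [(K.cast_nonneg : (0 : ℝ) ≤ K)]⟩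

end Nodes

section Ramp

variable {a h : ℝ}

theorem ramp_of_le {z : ℝ} (hh : 0 ≤ h) (hz : z ≤ a) : ramp a h z = 0 := by
  rw [ramp, max_eq_left (by linarith), max_eq_left (by linarith), sub_zero]

theorem ramp_of_ge {z : ℝ} (hh : 0 ≤ h) (hz : a + h ≤ z) : ramp a h z = h := by
  rw [ramp, max_eq_right (by linarith), max_eq_right (by linarith)]
  ring

theorem ramp_monotone (hh : 0 ≤ h) : Monotone (ramp a h) := by
  intro z z' hzz'
  simp only [ramp, max_def]
  split_ifs <;> linarith

end Ramp

section Interp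

variable {K : ℕ}

theorem interp_monotone (hK : 6 ≤ K) : Monotone (interp K) := by
  intro z z' hzz'
  unfold interp
  gcongr with k hk
  · obtain ⟨hk₁, hk₂⟩ := mem_Icc.1 hk
    exact (slope_mem_Icc hK hk₁ (by omega)).1
  · exact ramp_monotone (by positivity) hzz'

theorem interp_eq_logitNode {j : ℕ} {z : ℝ} (hj : 1 ≤ j) (hjK : j + 1 ≤ K)
    (hlo : j = 1 ∨ j / K ≤ z) (hhi : j + 1 = K ∨ z ≤ j / K) :
    interp K z = logitNode K j := by
  have hK' : (0 : ℝ) < K := by exact_mod_cast (by omega : 0 < K)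
  have hterm : ∀ k ∈ Icc 1 (K - 2), slope K k * ramp (k / K) (1 / K) z =
      if k < j then logitNode K (k + 1) - logitNode K k else 0 := by
    intro k hk
    obtain ⟨hk₁, hk₂⟩ := mem_Icc.1 hk
    split_ifs with hkj
    · have hkj' : (k : ℝ) + 1 ≤ j := by exact_mod_cast hkj
      rw [ramp_of_ge (by positivity), slope]
      · field_simp
      · rcases hlo with rfl | hlo
        · omega
        · calc (k / K : ℝ) + 1 / K = (k + 1) / K := by ring
            _ ≤ j / K := by gcongr
            _ ≤ z := hlo
    · have hjk : (j : ℝ) ≤ k := by exact_mod_cast not_lt.1 hkj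
      rw [ramp_of_le (by positivity), mul_zero]
      rcases hhi with hhi | hhi
      · omega
      · exact hhi.trans (by gcongr)
  have hcells : (Icc 1 (K - 2)).filter (· < j) = Ico 1 j := by
    ext k; simp only [mem_filter, mem_Icc, mem_Ico]; omega
  rw [interp, sum_congr rfl hterm, ← sum_filter, hcells,
    sum_Ico_sub (fun k => logitNode K k) hj]
  ring

theorem interp_div {j : ℕ} (hj : 1 ≤ j) (hjK : j + 1 ≤ K) :
    interp K (j / K) = logitNode K j :=
  interp_eq_logitNode hj hjK (Or.inr le_rfl) (Or.inr le_rfl)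

theorem interp_clip (hK : 2 ≤ K) (z : ℝ) : interp K (clip K z) = interp K z := by
  have hK' : (2 : ℝ) ≤ K := by exact_mod_cast hK
  have hcast : ((K - 1 : ℕ) : ℝ) = K - 1 := by rw [Nat.cast_sub (by omega), Nat.cast_one]
  have hend : (1 : ℝ) - 1 / K = (K - 1 : ℕ) / K := by rw [hcast]; field_simp
  by_cases hz₁ : z ≤ 1 / K
  · have hc : clip K z = 1 / K :=
      max_eq_left ((min_le_left _ _).trans hz₁)
    have h₁ := interp_eq_logitNode (z := 1 / K) le_rfl (by omega) (Or.inl rfl)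
      (Or.inr (by rw [Nat.cast_one]))
    rw [hc, h₁, interp_eq_logitNode le_rfl (by omega) (Or.inl rfl)
      (Or.inr (by rwa [Nat.cast_one]))]
  by_cases hz₂ : 1 - 1 / K ≤ z
  · have hc : clip K z = 1 - 1 / K := by
      rw [clip, min_eq_right hz₂, max_eq_right]
      rw [div_le_iff₀ (by positivity), sub_mul, div_mul_cancel₀ _ (by positivity)]
      linarith
    have hKj : K - 1 + 1 = K := by omega
    rw [hc, hend, interp_div (by omega) hKj.le,
      interp_eq_logitNode (by omega) hKj.le (Or.inr (by rwa [← hend])) (Or.inl hKj)]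
  · rw [clip, min_eq_left (not_le.1 hz₂).le, max_eq_right (not_le.1 hz₁).le]

end Interp

section Cells

variable {K : ℕ}

theorem exists_cell (hK : 3 ≤ K) {y : ℝ} (hy₁ : 1 / K ≤ y) (hy₂ : y ≤ 1 - 1 / K) :
    ∃ j : ℕ, 1 ≤ j ∧ j + 2 ≤ K ∧ (j / K : ℝ) ≤ y ∧ y ≤ (j + 1) / K := by
  have hK' : (0 : ℝ) < K := by exact_mod_cast (by omega : 0 < K)
  rw [div_le_iff₀' hK'] at hy₁
  have hy₂' : K * y ≤ K - 1 := by
    have := mul_le_mul_of_nonneg_left hy₂ hK'.le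
    rwa [mul_sub, mul_one, mul_one_div_cancel hK'.ne'] at this
  have hyK : 0 ≤ K * y := by linarith
  refine ⟨min ⌊K * y⌋₊ (K - 2), le_min (Nat.le_floor (by simpa using hy₁)) (by omega),
    by omega, ?_, ?_⟩
  · rw [div_le_iff₀' hK']
    exact (Nat.cast_le.2 (min_le_left _ _)).trans (Nat.floor_le hyK)
  · rw [le_div_iff₀' hK']
    rcases min_choice ⌊K * y⌋₊ (K - 2) with h | h <;> rw [h]
    · exact (Nat.lt_floor_add_one _).le
    · rw [Nat.cast_sub (by omega)]
      push_cast
      linarith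

theorem clip_mem_Icc (hK : 2 ≤ K) (z : ℝ) : clip K z ∈ Set.Icc (1 / K : ℝ) (1 - 1 / K) := by
  have hK' : (2 : ℝ) ≤ K := by exact_mod_cast hK
  refine ⟨le_max_left _ _, max_le ?_ (min_le_right _ _)⟩
  rw [le_sub_iff_add_le, ← add_div, div_le_one (by linarith)]
  linarith

theorem abs_clip_sub_le {p z ε : ℝ} (hp : p ∈ Set.Icc (0 : ℝ) 1) (hz : |z - p| ≤ ε) :
    |clip K z - p| ≤ 1 / K + ε := by
  obtain ⟨hz₁, hz₂⟩ := abs_le.1 hz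
  have hK : (0 : ℝ) ≤ 1 / K := by positivity
  rw [abs_le, clip]
  constructor
  · have : p - ε - 1 / K ≤ min z (1 - 1 / K) := le_min (by linarith) (by linarith [hp.2])
    linarith [le_max_right (1 / K : ℝ) (min z (1 - 1 / K))]
  · exact sub_le_iff_le_add'.2 <|
      max_le (by linarith [hp.1]) ((min_le_left _ _).trans (by linarith))

theorem exists_interp_cell (hK : 6 ≤ K) (z : ℝ) :
    ∃ j : ℕ, 1 ≤ j ∧ j + 2 ≤ K ∧ clip K z ∈ Set.Icc (j / K : ℝ) ((j + 1) / K) ∧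
      interp K z ∈ Set.Icc (logitNode K j) (logitNode K (j + 1)) := by
  obtain ⟨hy₁, hy₂⟩ := clip_mem_Icc (K := K) (by omega) z
  obtain ⟨j, hj, hjK, hjy, hyj⟩ := exists_cell (by omega) hy₁ hy₂
  refine ⟨j, hj, hjK, ⟨hjy, hyj⟩, ?_⟩
  rw [← interp_clip (by omega), ← interp_div hj (by omega),
    ← interp_div (j := j + 1) (by omega) (by omega)]
  exact ⟨interp_monotone hK hjy, interp_monotone hK (by push_cast; exact hyj)⟩

theorem abs_interp_le (hK : 6 ≤ K) (z : ℝ) : |interp K z| ≤ log K := by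
  obtain ⟨j, hj, hjK, -, hlo, hhi⟩ := exists_interp_cell hK z
  have h₁ := abs_le.1 (abs_logitNode_le (K := K) (k := j) hj (by omega))
  have h₂ := abs_le.1 (abs_logitNode_le (K := K) (k := j + 1) (by omega) (by omega))
  exact abs_le.2 ⟨by linarith, by linarith⟩

theorem exists_sigmoid_interp_cell (hK : 6 ≤ K) (z : ℝ) :
    ∃ j : ℕ, 1 ≤ j ∧ j + 2 ≤ K ∧ clip K z ∈ Set.Icc (j / K : ℝ) ((j + 1) / K) ∧
      sigmoid (interp K z) ∈ Set.Icc (j / K : ℝ) ((j + 1) / K) := by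
  obtain ⟨j, hj, hjK, hclip, hlo, hhi⟩ := exists_interp_cell hK z
  refine ⟨j, hj, hjK, hclip, ?_, ?_⟩
  · rw [← sigmoid_logitNode hj (by omega)]
    exact sigmoid_le hlo
  · have h := sigmoid_le hhi
    rwa [sigmoid_logitNode (by omega) (by omega), Nat.cast_succ] at h

theorem sigmoid_interp_mem_Icc (hK : 6 ≤ K) (z : ℝ) :
    sigmoid (interp K z) ∈ Set.Icc (1 / K : ℝ) (1 - 1 / K) := by
  obtain ⟨j, hj, hjK, -, hlo, hhi⟩ := exists_sigmoid_interp_cell hK z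
  have hj' : (1 : ℝ) ≤ j := by exact_mod_cast hj
  have hjK' : (j : ℝ) + 2 ≤ K := by exact_mod_cast hjK
  have hK' : (0 : ℝ) < K := by linarith
  refine ⟨le_trans (by gcongr) hlo, hhi.trans ?_⟩
  rw [div_le_iff₀ hK', sub_mul, one_div_mul_cancel hK'.ne']
  linarith

theorem abs_sub_sigmoid_interp_le (hK : 6 ≤ K) {p z ε : ℝ} (hp : p ∈ Set.Icc (0 : ℝ) 1)
    (hz : |z - p| ≤ ε) : |p - sigmoid (interp K z)| ≤ 2 / K + ε := by
  obtain ⟨j, -, -, ⟨hc₁, hc₂⟩, hs₁, hs₂⟩ := exists_sigmoid_interp_cell hK z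
  obtain ⟨h₁, h₂⟩ := abs_le.1 (abs_clip_sub_le (K := K) hp hz)
  have hwidth : ((j : ℝ) + 1) / K = j / K + 1 / K := by ring
  have htwo : (2 : ℝ) / K = 1 / K + 1 / K := by ring
  rw [abs_le]
  constructor <;> linarith

end Cells

theorem sum_Icc_eq_sum_add_shift {M : Type*} [AddCommMonoid M] (g : ℕ → M) {n r : ℕ}
    (hnr : 2 * n ≤ r) (hg : ∀ i ∈ Ioc (2 * n) r, g i = 0) :
    ∑ i ∈ Icc 1 r, g i = ∑ k ∈ Icc 1 n, (g k + g (k + n)) := by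
  have htail : ∑ i ∈ Ico (2 * n + 1) (r + 1), g i = 0 :=
    sum_eq_zero fun i hi => hg i (by simp only [mem_Ico, mem_Ioc] at hi ⊢; omega)
  simp only [sum_add_distrib, ← Ico_add_one_right_eq_Icc]
  rw [sum_Ico_add',
    ← sum_Ico_consecutive _ (by omega : 1 ≤ 2 * n + 1) (by omega : 2 * n + 1 ≤ r + 1), htail,
    add_zero, ← sum_Ico_consecutive _ (by omega : 1 ≤ n + 1) (by omega : n + 1 ≤ 2 * n + 1)]
  rw [show 1 + n = n + 1 by omega, show n + 1 + n = 2 * n + 1 by omega]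

/-- Output weights of the network realizing `interp K`: neuron `k` and neuron `k + (K - 2)`
(`1 ≤ k ≤ K - 2`) together produce `slope K k * ramp (k / K) (1 / K)`. -/
def netOut (K i : ℕ) : ℝ :=
  if i = 0 then logitNode K 1
  else if i ≤ K - 2 then slope K i
  else if i ≤ 2 * (K - 2) then -slope K (i - (K - 2))
  else 0

def netBias (K i : ℕ) : ℝ :=
  if i ≤ K - 2 then -(i / K)
  else if i ≤ 2 * (K - 2) then -((i - (K - 2) : ℕ) / K + 1 / K)
  else 0

theorem shallowEval_net {K r : ℕ} (hr : 2 * (K - 2) ≤ r) (z : ℝ) :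
    shallowEval r (netOut K) (fun _ => 1) (netBias K) z = interp K z := by
  rw [shallowEval, interp, sum_Icc_eq_sum_add_shift _ hr]
  · rw [show netOut K 0 = logitNode K 1 from if_pos rfl]
    refine congrArg _ (sum_congr rfl fun k hk => ?_)
    obtain ⟨hk₁, hk₂⟩ := mem_Icc.1 hk
    rw [netOut, netOut, netBias, netBias, if_neg (by omega), if_pos hk₂, if_pos hk₂,
      if_neg (by omega), if_neg (by omega), if_pos (by omega), if_neg (by omega),
      if_pos (by omega), Nat.add_sub_cancel, ramp]
    ring_nf
  · intro i hi
    have hi' := mem_Ioc.1 hi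
    rw [netOut, if_neg (by omega), if_neg (by omega), if_neg (by omega), zero_mul]

theorem abs_netOut_le {K : ℕ} (hK : 6 ≤ K) (i : ℕ) : |netOut K i| ≤ K := by
  have hlog : log K ≤ K := log_le_self K.cast_nonneg
  unfold netOut
  split_ifs with h₀ h₁ h₂
  · exact (abs_logitNode_le Nat.one_pos (by omega)).trans hlog
  · obtain ⟨hs₀, hs₁⟩ := slope_mem_Icc hK (by omega) (by omega : i + 2 ≤ K)
    rwa [abs_of_nonneg hs₀]
  · obtain ⟨hs₀, hs₁⟩ := slope_mem_Icc hK (by omega) (by omega : i - (K - 2) + 2 ≤ K)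
    rwa [abs_neg, abs_of_nonneg hs₀]
  · simp

theorem abs_netBias_le {K : ℕ} (hK : 0 < K) (i : ℕ) : |netBias K i| ≤ 1 := by
  have hK' : (0 : ℝ) < K := by exact_mod_cast hK
  unfold netBias
  split_ifs with h₁ h₂
  · rw [abs_neg, abs_of_nonneg (by positivity), div_le_one hK']
    exact_mod_cast (by omega : i ≤ K)
  · rw [abs_neg, abs_of_nonneg (by positivity), ← add_div, div_le_one hK']
    exact_mod_cast (by omega : i - (K - 2) + 1 ≤ K)
  · simp

theorem abs_shallowEval_sub_interp_le {K : ℕ} (hK : 6 ≤ K) {z εb : ℝ} {w1' wa' wb' : ℕ → ℝ}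
    (hz : |z| ≤ 2) (hεb : εb ≤ 1) (hw1' : ∀ i ∈ Icc 0 (3 * K + 9), |w1' i - netOut K i| ≤ εb)
    (hwab' : ∀ i ∈ Icc 1 (3 * K + 9), |wa' i - 1| ≤ εb ∧ |wb' i - netBias K i| ≤ εb) :
    |shallowEval (3 * K + 9) w1' wa' wb' z - interp K z| ≤ 132 * K ^ 2 * εb := by
  have hK' : (6 : ℝ) ≤ K := by exact_mod_cast hK
  have hεb₀ : 0 ≤ εb := (abs_nonneg _).trans (hw1' 0 (by simp))
  rw [← shallowEval_net (K := K) (r := 3 * K + 9) (by omega) z]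
  refine (abs_shallowEval_sub_le (A := 1) (B := K) z (fun i _ => abs_netOut_le hK i)
    (fun i _ => ⟨abs_one.le, abs_netBias_le (by omega) i⟩) hεb hw1' hwab').trans ?_
  gcongr
  push_cast
  nlinarith [abs_nonneg z]

end LogisticNet

open LogisticNet

/-- `φ(f(m(x)))` for `f(z) = log (z/(1-z))` extended by continuity, as a real number:
`φ(f(z)) = -log z` for `z ∈ (0,1]`; the convention `0 · (… - φ(f(0))) = 0` (and
symmetrically at `z = 1`) is built into the two error terms below. -/
theorem statement_11 :
    ∃ c₁₆ : ℝ, 0 < c₁₆ ∧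
    ∀ (d₁ d₂ K : ℕ), 6 ≤ K →
    ∀ (m gbar : (ℕ → ℕ → ℝ) → ℝ), (∀ x, m x ∈ Set.Icc (0 : ℝ) 1) →
    ∀ ε : ℝ, 0 ≤ ε → ε ≤ 1 / K →
    (∀ x, cube d₁ d₂ x → |gbar x - m x| ≤ ε) →
    ∃ w1 wa wb : ℕ → ℝ,
      (∀ i ∈ Finset.Icc 0 (3 * K + 9), |w1 i| ≤ K) ∧
      (∀ i ∈ Finset.Icc 1 (3 * K + 9), |wa i| ≤ K ∧ |wb i| ≤ K) ∧
      ∀ (εb : ℝ) (w1' wa' wb' : ℕ → ℝ), 0 ≤ εb → εb ≤ 1 →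
        (∀ i ∈ Finset.Icc 0 (3 * K + 9), |w1' i - w1 i| ≤ εb) →
        (∀ i ∈ Finset.Icc 1 (3 * K + 9), |wa' i - wa i| ≤ εb ∧ |wb' i - wb i| ≤ εb) →
        (∀ x, cube d₁ d₂ x →
          |shallowEval (3 * K + 9) w1' wa' wb' (gbar x)| ≤ 132 * K ^ 2 * εb + Real.log K) ∧
        ∀ x, cube d₁ d₂ x →
          |if m x = 0 then 0 else
              m x * (logloss (shallowEval (3 * K + 9) w1' wa' wb' (gbar x))
                - (-Real.log (m x)))| +
          |if m x = 1 then 0 else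
              (1 - m x) * (logloss (-(shallowEval (3 * K + 9) w1' wa' wb' (gbar x)))
                - (-Real.log (1 - m x)))|
            ≤ c₁₆ * (Real.log K / K + ε) + 132 * K ^ 2 * εb := by
  refine ⟨20, by norm_num, fun d₁ d₂ K hK m gbar hm ε _ hεK hgm => ?_⟩
  have hK' : (6 : ℝ) ≤ K := by exact_mod_cast hK
  have hK₁ : 1 / (K : ℝ) ≤ 1 := by rw [div_le_one (by positivity)]; linarith
  refine ⟨netOut K, fun _ => 1, netBias K, fun i _ => abs_netOut_le hK i,
    fun i _ => ⟨by rw [abs_one]; linarith, (abs_netBias_le (by omega) i).trans (by linarith)⟩, ?_⟩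
  intro εb w1' wa' wb' _ hεb hw1' hwab'
  set net := shallowEval (3 * K + 9) w1' wa' wb'
  have hgbar : ∀ x, cube d₁ d₂ x → |gbar x| ≤ 2 := fun x hx => by
    linarith [abs_sub_abs_le_abs_sub (gbar x) (m x), abs_of_nonneg (hm x).1, hgm x hx, (hm x).2]
  have hnet : ∀ x, cube d₁ d₂ x → |net (gbar x) - interp K (gbar x)| ≤ 132 * K ^ 2 * εb :=
    fun x hx => abs_shallowEval_sub_interp_le hK (hgbar x hx) hεb hw1' hwab'
  refine ⟨fun x hx => ?_, fun x hx => ?_⟩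
  · linarith [hnet x hx, abs_interp_le hK (gbar x),
      abs_sub_abs_le_abs_sub (net (gbar x)) (interp K (gbar x))]
  obtain ⟨hq₁, hq₂⟩ := sigmoid_interp_mem_Icc hK (gbar x)
  have htwo : (2 : ℝ) / K = 2 * (1 / K) := by ring
  have hδ : 2 / (K : ℝ) + ε ≤ 3 * (1 / K) := by linarith
  have hloss := logistic_loss_error_le (t := net (gbar x)) (hm x) hq₁ hq₂
    (abs_sub_sigmoid_interp_le hK (hm x) (hgm x hx)) hδ
  have hlogK : 1 / (K : ℝ) ≤ log K / K := by
    gcongr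
    rw [le_log_iff_exp_le (by positivity)]
    linarith [exp_one_lt_d9]
  linarith [hnet x hx]
end
end
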